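/- arXiv:1907.07250 — 3 statements merged into one kernel-verified Lean document; each statement's English description precedes it below -/
import Mathlib

section
/- Let ε > 0 and let p : ℕ → (0, 1/2] be a function such that n·p(n)/log n → ∞ as n → ∞. If χ is a random (p(n), 1−p(n))-colouring of the hypercube Q_n, then with high probability χ is 3-distinguishable. -/
open MeasureTheory Filter Set Asymptotics Topology

noncomputable section

/-- Vertices of the `n`-dimensional hypercube. -/
abbrev V (n : ℕ) : Type := Fin n → Bool

/-- The hypercube graph `Q_n`. -/
def Q (n : ℕ) : SimpleGraph (V n) :=
  SimpleGraph.fromRel (fun u v => hammingDist u v = 1)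

/-- The neighbourhood of a vertex in `Q_n`. -/
def nbhd (n : ℕ) (v : V n) : Set (V n) := (Q n).neighborSet v

/-- The neighbourhood of a set of vertices. -/
def nbhdSet (n : ℕ) (A : Set (V n)) : Set (V n) := ⋃ v ∈ A, nbhd n v

/-- The set of vertices at graph distance exactly `k` from the set `A`. -/
def sphereSet (n k : ℕ) (A : Set (V n)) : Set (V n) :=
  {w | (∃ v ∈ A, (Q n).dist v w = k) ∧ ∀ v ∈ A, k ≤ (Q n).dist v w}

/-- The ball of radius `r` about `v` (as a set of vertices). -/
def ball (n : ℕ) (v : V n) (r : ℕ) : Set (V n) := {w | (Q n).dist v w ≤ r}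

/-- `χ^(r)(u) ≅ lam^(r)(w)` : the coloured `r`-balls around `u` (coloured by `χ`) and
`w` (coloured by `lam`) are isomorphic as coloured graphs. -/
def LocallyEq {C : Type} (n r : ℕ) (χ lam : V n → C) (u w : V n) : Prop :=
  ∃ φ : ((Q n).induce (ball n u r)) ≃g ((Q n).induce (ball n w r)),
    ∀ x : ball n u r, χ x.1 = lam ((φ x).1)

/-- `d(χ^(r)(u), lam^(r)(w)) ≤ m` : some isomorphism of the `r`-balls realises at most `m`
colour disagreements. -/
def BallDistLE {C : Type} (n r : ℕ) (χ lam : V n → C) (u w : V n) (m : ℝ) : Prop :=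
  ∃ φ : ((Q n).induce (ball n u r)) ≃g ((Q n).induce (ball n w r)),
    (({x : ball n u r | χ x.1 ≠ lam ((φ x).1)}.ncard : ℝ)) ≤ m

/-- A colouring is `r`-distinguishable if every `r`-locally equivalent colouring is obtained
from it by a graph automorphism. -/
def Distinguishable {C : Type} (n r : ℕ) (χ : V n → C) : Prop :=
  ∀ lam : V n → C,
    (∃ f : V n ≃ V n, ∀ v, LocallyEq n r χ lam v (f v)) →
    ∃ g : (Q n) ≃g (Q n), lam = fun v => χ (g.symm v)

/-- `Isom^(r)(χ)` : the set of bijections `f` with `χ^(r)(v) ≅ (χ ∘ f⁻¹)^(r)(f v)` for all `v`. -/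
def IsomSet {C : Type} (n r : ℕ) (χ : V n → C) : Set (V n ≃ V n) :=
  {f | ∀ v, LocallyEq n r χ (fun x => χ (f.symm x)) v (f v)}

/-- `Cluster^r_R` : bijections `h` such that `|Γ^r(h(Γ(v)))| ≤ binom(n, r+1) + R` for all `v`. -/
def ClusterSet (n r : ℕ) (R : ℝ) : Set (V n ≃ V n) :=
  {h | ∀ v, ((sphereSet n r (⇑h '' nbhd n v)).ncard : ℝ) ≤ (n.choose (r+1) : ℝ) + R}

/-- `g` is a dual of `f` (at level `s`): `|f(Γ(v)) ∩ Γ(g(v))| ≥ n − s` for all `v`. -/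
def IsDualF (n : ℕ) (s : ℝ) (f g : V n → V n) : Prop :=
  ∀ v, (n : ℝ) - s ≤ (((f '' nbhd n v) ∩ nbhd n (g v)).ncard : ℝ)

/-- `f` is `s`-approximately local: it has a dual at level `s`. -/
def ApproxLocalF (n : ℕ) (s : ℝ) (f : V n → V n) : Prop :=
  ∃ g : V n → V n, IsDualF n s f g

/-- `Local_s` : the set of `s`-approximately local bijections. -/
def LocalSet (n : ℕ) (s : ℝ) : Set (V n ≃ V n) :=
  {f | ApproxLocalF n s ⇑f}

/-- `Mono^t_s` : bijections in `Cluster¹_s` for which, for every `v`, at most one vertex `w`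
has `|f(Γ(v)) ∩ Γ(w)| > t`. -/
def MonoSet (n : ℕ) (s t : ℝ) : Set (V n ≃ V n) :=
  {f | f ∈ ClusterSet n 1 s ∧ ∀ v w₁ w₂ : V n,
      t < (((⇑f '' nbhd n v) ∩ nbhd n w₁).ncard : ℝ) →
      t < (((⇑f '' nbhd n v) ∩ nbhd n w₂).ncard : ℝ) → w₁ = w₂}

/-- The dual `f_⋆` of `f` : for each `v`, a vertex `w` maximising `|f(Γ(v)) ∩ Γ(w)|`
(which is the unique dual vertex whenever `f` is `s`-approximately local with `s < n/2`). -/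
def dualF (n : ℕ) (f : V n → V n) : V n → V n :=
  fun v => Classical.epsilon fun w =>
    ∀ w', ((f '' nbhd n v) ∩ nbhd n w').ncard ≤ ((f '' nbhd n v) ∩ nbhd n w).ncard

/-- The Bernoulli measure on `Bool`: `false` (colour 0) has probability `p`,
`true` (colour 1) has probability `1 - p`. -/
def bern (p : ℝ) : Measure Bool :=
  ENNReal.ofReal p • Measure.dirac false + ENNReal.ofReal (1 - p) • Measure.dirac true

/-- The law of a random `(p, 1-p)`-colouring of `Q_n`: i.i.d. Bernoulli colours. -/
def colMeasure (n : ℕ) (p : ℝ) : Measure (V n → Bool) :=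
  Measure.pi fun _ => bern p

/-- The uniform measure on `Fin q`. -/
def unifFin (q : ℕ) : Measure (Fin q) :=
  ((q : ENNReal))⁻¹ • Measure.count

/-- The law of a random `q`-colouring of `Q_n`: i.i.d. uniform colours. -/
def qColMeasure (n q : ℕ) : Measure (V n → Fin q) :=
  Measure.pi fun _ => unifFin q

/-!
Call `χ` second-sphere distinct if there are no distinct vertices `u ≠ u'` and coordinate
permutation `σ` with `χ (u + e i + e j) = χ (u' + e (σ i) + e (σ j))` for all `i ≠ j`.
A coloured isomorphism of radius-`2` balls sends centre to centre and acts on the sphere of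
radius `2` by a permutation of coordinates. So if `χ` and `λ` are `3`-locally equivalent via `f`
and `χ` is second-sphere distinct, the ball isomorphism at `v` sends each neighbour `u` of `v`
to a vertex whose `2`-ball is coloured like those of both `u` and `f⁻¹` of it, hence to `f u`;
thus `f` is an automorphism of `Q_n` carrying `χ` to `λ`.

For fixed `(u, u', σ)` at least `(n - 4).choose 2` of the constraints are nontrivial, and a
greedy choice leaves `n² / 7` of them on pairwise disjoint pairs of vertices. Each of these holds
with probability at most `1 - p`, independently, so a union bound over the `4ⁿ n!` triples bounds
the failure probability by `4ⁿ n! (1 - p)^(n² / 7) ≤ e⁻ⁿ` as soon as `n p ≥ 35 log n`.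
-/

open scoped symmDiff

namespace Finset

lemma card_symmDiff_singleton_add_one {α : Type*} [DecidableEq α] {s : Finset α} {i : α}
    (h : i ∈ s) : #(s ∆ {i}) + 1 = #s := by
  rw [symmDiff_of_ge (singleton_subset_iff.2 h), sdiff_singleton_eq_erase, card_erase_add_one h]

lemma card_symmDiff_singleton {α : Type*} [DecidableEq α] {s : Finset α} {i : α}
    (h : i ∉ s) : #(s ∆ {i}) = #s + 1 := by
  rw [symmDiff_eq_union (disjoint_singleton_right.2 h), union_comm, ← insert_eq,
    card_insert_of_notMem h]

/-- Greedy choice: each chosen index `q` rules out at most the two indices `q'` with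
`l q' = r q` or `r q' = l q`. -/
lemma exists_subset_card_le_three_mul {ι α : Type*} [DecidableEq ι] (P : Finset ι)
    (l r : ι → α) (hl : Set.InjOn l P) (hr : Set.InjOn r P) (hlr : ∀ q ∈ P, l q ≠ r q) :
    ∃ M ⊆ P, #P ≤ 3 * #M ∧ ∀ q ∈ M, ∀ q' ∈ M, l q ≠ r q' := by
  induction P using Finset.strongInduction with
  | H P ih =>
  rcases P.eq_empty_or_nonempty with rfl | ⟨q, hq⟩
  · exact ⟨∅, subset_refl _, by simp, by simp⟩
  classical
  set P' := P.filter fun q' => q' ≠ q ∧ l q' ≠ r q ∧ r q' ≠ l q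
  have hP' : P' ⊆ P := filter_subset _ _
  obtain ⟨M, hMP', hM, hMlr⟩ := ih P' (filter_ssubset.2 ⟨q, hq, by simp⟩) (hl.mono hP')
    (hr.mono hP') fun q' hq' => hlr q' (hP' hq')
  have hcard : #P ≤ #P' + 3 := by
    have hle_one : ∀ f : ι → α, Set.InjOn f P → ∀ a, #{q' ∈ P | f q' = a} ≤ 1 :=
      fun f hf a => card_le_one.2 fun x hx y hy => hf (mem_filter.1 hx).1 (mem_filter.1 hy).1
        ((mem_filter.1 hx).2.trans (mem_filter.1 hy).2.symm)
    have hrest : P.filter (fun q' => ¬(q' ≠ q ∧ l q' ≠ r q ∧ r q' ≠ l q)) ⊆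
        insert q (P.filter (fun q' => l q' = r q) ∪ P.filter (fun q' => r q' = l q)) := by
      intro x hx
      simp only [mem_filter, not_and_or, not_not] at hx
      simp only [mem_insert, mem_union, mem_filter]
      tauto
    have := (card_le_card hrest).trans (card_insert_le _ _)
    have := card_union_le (P.filter (fun q' => l q' = r q)) (P.filter (fun q' => r q' = l q))
    have := hle_one l hl (r q)
    have := hle_one r hr (l q)
    have : #P' + #(P.filter fun q' => ¬(q' ≠ q ∧ l q' ≠ r q ∧ r q' ≠ l q)) = #P :=
      card_filter_add_card_filter_not _
    omega
  have hqM : q ∉ M := fun h => by simpa [P'] using hMP' h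
  refine ⟨insert q M, insert_subset hq (hMP'.trans hP'), ?_, ?_⟩
  · rw [card_insert_of_notMem hqM]
    omega
  · have hfar : ∀ q' ∈ M, l q' ≠ r q ∧ r q' ≠ l q := fun q' hq' => by
      have := (mem_filter.1 (hMP' hq')).2
      exact ⟨this.2.1, this.2.2⟩
    simp only [mem_insert, forall_eq_or_imp]
    exact ⟨⟨hlr q hq, fun q' hq' => (hfar q' hq').2.symm⟩,
      fun q' hq' => ⟨(hfar q' hq').1, hMlr q' hq'⟩⟩

end Finset

namespace Hypercube

open Finset

variable {n : ℕ}

def flipSet (x : V n) (s : Finset (Fin n)) : V n := fun i => xor (x i) (decide (i ∈ s))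

@[simp] lemma flipSet_apply (x : V n) (s : Finset (Fin n)) (i : Fin n) :
    flipSet x s i = xor (x i) (decide (i ∈ s)) := rfl

@[simp] lemma flipSet_empty (x : V n) : flipSet x ∅ = x := by
  ext i; simp

lemma flipSet_flipSet (x : V n) (s t : Finset (Fin n)) :
    flipSet (flipSet x s) t = flipSet x (s ∆ t) := by
  ext i
  by_cases hs : i ∈ s <;> by_cases ht : i ∈ t <;> simp [hs, ht, Finset.mem_symmDiff]

lemma exists_flipSet_eq (x y : V n) : ∃ s, flipSet x s = y := by
  classical
  refine ⟨({i | x i ≠ y i} : Finset (Fin n)), funext fun i => ?_⟩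
  by_cases h : x i = y i <;> simp [h]
  revert h; cases x i <;> cases y i <;> simp

lemma hammingDist_flipSet_flipSet (x : V n) (s t : Finset (Fin n)) :
    hammingDist (flipSet x s) (flipSet x t) = #(s ∆ t) := by
  classical
  unfold hammingDist
  congr 1
  ext i
  by_cases hs : i ∈ s <;> by_cases ht : i ∈ t <;> simp [hs, ht, Finset.mem_symmDiff]

lemma hammingDist_flipSet (x : V n) (s : Finset (Fin n)) : hammingDist x (flipSet x s) = #s := by
  have := hammingDist_flipSet_flipSet x ∅ s
  rwa [flipSet_empty, ← Finset.bot_eq_empty, bot_symmDiff] at this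

lemma flipSet_injective (x : V n) : Function.Injective (flipSet x) := by
  intro s t h
  have := hammingDist_flipSet_flipSet x s t
  rwa [h, hammingDist_self, eq_comm, card_eq_zero, ← Finset.bot_eq_empty, symmDiff_eq_bot] at this

lemma Q_adj_iff {x y : V n} : (Q n).Adj x y ↔ hammingDist x y = 1 := by
  rw [Q, SimpleGraph.fromRel_adj, hammingDist_comm y x, or_self, and_iff_right_iff_imp]
  intro h hxy
  simp [hxy] at h

lemma hammingDist_le_length {x y : V n} (W : (Q n).Walk x y) : hammingDist x y ≤ W.length := by
  induction W with
  | nil => simp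
  | @cons u v w h W ih =>
    calc hammingDist u w ≤ hammingDist u v + hammingDist v w := hammingDist_triangle _ _ _
      _ = 1 + hammingDist v w := by rw [Q_adj_iff.1 h]
      _ ≤ (W.cons h).length := by rw [SimpleGraph.Walk.length_cons]; omega

lemma hammingDist_le_length_induce {S : Set (V n)} {x y : S} (W : ((Q n).induce S).Walk x y) :
    hammingDist x.1 y.1 ≤ W.length := by
  have := hammingDist_le_length (W.map (SimpleGraph.Embedding.induce S).toHom)
  rwa [SimpleGraph.Walk.length_map] at this

lemma exists_adj_hammingDist_lt {v x y : V n} {r : ℕ} (hx : hammingDist v x ≤ r)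
    (hy : hammingDist v y ≤ r) (hxy : x ≠ y) :
    ∃ x', (Q n).Adj x x' ∧ hammingDist v x' ≤ r ∧
      hammingDist x' y + 1 = hammingDist x y := by
  obtain ⟨A, rfl⟩ := exists_flipSet_eq v x
  obtain ⟨B, rfl⟩ := exists_flipSet_eq v y
  rw [hammingDist_flipSet] at hx hy
  have hAB : A ≠ B := fun h => hxy (h ▸ rfl)
  -- Move towards `v` if possible, otherwise `A ⊂ B` and we move inside `B`.
  obtain ⟨i, hiAB, hiA⟩ : ∃ i ∈ A ∆ B, #(A ∆ {i}) ≤ r := by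
    by_cases hsub : A ⊆ B
    · obtain ⟨i, hiB, hiA⟩ := exists_of_ssubset (ssubset_of_subset_of_ne hsub hAB)
      refine ⟨i, mem_symmDiff.2 (Or.inr ⟨hiB, hiA⟩), ?_⟩
      rw [card_symmDiff_singleton hiA]
      exact (card_lt_card (ssubset_of_subset_of_ne hsub hAB)).trans_le hy
    · obtain ⟨i, hiA, hiB⟩ := Finset.not_subset.1 hsub
      refine ⟨i, mem_symmDiff.2 (Or.inl ⟨hiA, hiB⟩), ?_⟩
      have := card_symmDiff_singleton_add_one hiA
      omega
  refine ⟨flipSet v (A ∆ {i}), ?_, by rwa [hammingDist_flipSet], ?_⟩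
  · rw [Q_adj_iff, hammingDist_flipSet_flipSet, symmDiff_symmDiff_cancel_left,
      Finset.card_singleton]
  · rw [hammingDist_flipSet_flipSet, hammingDist_flipSet_flipSet, symmDiff_right_comm]
    exact card_symmDiff_singleton_add_one hiAB

lemma exists_walk_induce_of_hammingBall {v : V n} {r : ℕ} {S : Set (V n)}
    (hS : ∀ z, z ∈ S ↔ hammingDist v z ≤ r) {x y : V n} (hx : x ∈ S) (hy : y ∈ S) :
    ∃ W : ((Q n).induce S).Walk ⟨x, hx⟩ ⟨y, hy⟩, W.length = hammingDist x y := by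
  induction h : hammingDist x y generalizing x with
  | zero => obtain rfl := eq_of_hammingDist_eq_zero h; exact ⟨.nil, rfl⟩
  | succ d ih =>
    obtain ⟨x', hadj, hx', hd⟩ :=
      exists_adj_hammingDist_lt ((hS x).1 hx) ((hS y).1 hy) (by rintro rfl; simp at h)
    obtain ⟨W, hW⟩ := ih ((hS x').2 hx') (by omega)
    exact ⟨.cons (by simpa using hadj) W, by simp [hW]⟩

lemma Q_dist_eq_hammingDist (x y : V n) : (Q n).dist x y = hammingDist x y := by
  have hS : ∀ z, z ∈ (Set.univ : Set (V n)) ↔ hammingDist x z ≤ n := fun z => by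
    simpa using hammingDist_le_card_fintype (x := x) (y := z)
  obtain ⟨W, hW⟩ := exists_walk_induce_of_hammingBall hS (x := x) (y := y) trivial trivial
  let P := W.map (SimpleGraph.Embedding.induce Set.univ).toHom
  have hP : P.length = hammingDist x y := by rw [SimpleGraph.Walk.length_map, hW]
  obtain ⟨P', hP'⟩ := SimpleGraph.Reachable.exists_walk_length_eq_dist ⟨P⟩
  exact le_antisymm (hP ▸ SimpleGraph.dist_le P) (hP' ▸ hammingDist_le_length P')

@[simp] lemma mem_ball_iff {v x : V n} {r : ℕ} : x ∈ ball n v r ↔ hammingDist v x ≤ r := by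
  simp [ball, Q_dist_eq_hammingDist]

lemma hammingDist_hom_apply_le {v : V n} {r : ℕ} {S T : Set (V n)}
    (hS : ∀ z, z ∈ S ↔ hammingDist v z ≤ r) (ψ : (Q n).induce S →g (Q n).induce T)
    (x y : S) :
    hammingDist (ψ x).1 (ψ y).1 ≤ hammingDist x.1 y.1 := by
  obtain ⟨W, hW⟩ := exists_walk_induce_of_hammingBall hS x.2 y.2
  simpa [SimpleGraph.Walk.length_map, hW] using hammingDist_le_length_induce (W.map ψ)

lemma hammingDist_iso_apply {u w : V n} {r : ℕ}
    (φ : (Q n).induce (ball n u r) ≃g (Q n).induce (ball n w r)) (x y : ball n u r) :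
    hammingDist (φ x).1 (φ y).1 = hammingDist x.1 y.1 := by
  refine le_antisymm (hammingDist_hom_apply_le (fun _ => mem_ball_iff) φ.toHom x y) ?_
  simpa using hammingDist_hom_apply_le (fun _ => mem_ball_iff) φ.symm.toHom (φ x) (φ y)

lemma eq_of_hammingBall_subset {r : ℕ} (hrn : 2 * r ≤ n) {w x : V n}
    (h : ∀ y, hammingDist w y ≤ r → hammingDist x y ≤ r) : x = w := by
  obtain ⟨D, rfl⟩ := exists_flipSet_eq w x
  have hD : #D ≤ r := by simpa [hammingDist_comm, hammingDist_flipSet] using h w (by simp)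
  suffices D = ∅ by simp [this]
  by_contra hne
  -- A point at distance `r` from `w` on the far side from `flipSet w D`.
  obtain ⟨S, hSD, hS⟩ : ∃ S ⊆ Finset.univ \ D, #S = r :=
    Finset.exists_subset_card_eq (by rw [card_sdiff_of_subset (subset_univ D)]; simp; omega)
  have hdisj : Disjoint D S := disjoint_of_subset_right hSD disjoint_sdiff
  have := h (flipSet w S) (by rw [hammingDist_flipSet, hS])
  rw [hammingDist_flipSet_flipSet, Finset.symmDiff_eq_union hdisj, card_union_of_disjoint hdisj,
    hS] at this
  exact hne (card_eq_zero.1 (by omega))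

section Colourings

variable {C : Type}

/-- `F` stands for a colour-preserving isomorphism from the `r`-ball about `u` onto the one
about `w`; its values off `ball n u r` are irrelevant. -/
structure IsColouredBallIso (χ lam : V n → C) (r : ℕ) (u w : V n) (F : V n → V n) :
    Prop where
  mapsTo : Set.MapsTo F (ball n u r) (ball n w r)
  surjOn : Set.SurjOn F (ball n u r) (ball n w r)
  hammingDist_eq :
    ∀ x ∈ ball n u r, ∀ y ∈ ball n u r, hammingDist (F x) (F y) = hammingDist x y
  colour_eq : ∀ x ∈ ball n u r, χ x = lam (F x)

lemma LocallyEq.exists_isColouredBallIso {χ lam : V n → C} {r : ℕ} {u w : V n}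
    (h : LocallyEq n r χ lam u w) : ∃ F, IsColouredBallIso χ lam r u w F := by
  classical
  obtain ⟨φ, hφ⟩ := h
  let F : V n → V n := fun x => if hx : x ∈ ball n u r then (φ ⟨x, hx⟩).1 else x
  have hF : ∀ x (hx : x ∈ ball n u r), F x = (φ ⟨x, hx⟩).1 := fun x hx => dif_pos hx
  refine ⟨F, fun x hx => hF x hx ▸ (φ ⟨x, hx⟩).2, fun y hy => ?_, fun x hx y hy => ?_,
    fun x hx => hF x hx ▸ hφ ⟨x, hx⟩⟩
  · exact ⟨_, (φ.symm ⟨y, hy⟩).2, by simp [hF _ (φ.symm ⟨y, hy⟩).2]⟩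
  · rw [hF x hx, hF y hy]
    exact hammingDist_iso_apply φ ⟨x, hx⟩ ⟨y, hy⟩

namespace IsColouredBallIso

variable {χ lam : V n → C} {r : ℕ} {u w : V n} {F : V n → V n}

lemma apply_center (h : IsColouredBallIso χ lam r u w F) (hrn : 2 * r ≤ n) : F u = w := by
  refine eq_of_hammingBall_subset hrn fun y hy => ?_
  obtain ⟨x, hx, rfl⟩ := h.surjOn (mem_ball_iff.2 hy)
  rw [h.hammingDist_eq u (by simp) x hx]
  exact mem_ball_iff.1 hx

lemma restrict {k : ℕ} (h : IsColouredBallIso χ lam (r + k) u w F) (hn : 2 * (r + k) ≤ n)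
    {u' : V n} (hu' : hammingDist u u' ≤ k) : IsColouredBallIso χ lam r u' (F u') F := by
  have hsub : ball n u' r ⊆ ball n u (r + k) := fun x hx => by
    have := hammingDist_triangle u u' x
    simp only [mem_ball_iff] at hx ⊢
    omega
  have hu'mem : u' ∈ ball n u (r + k) := hsub (by simp)
  refine ⟨fun x hx => ?_, fun y hy => ?_,
    fun x hx y hy => h.hammingDist_eq x (hsub hx) y (hsub hy),
    fun x hx => h.colour_eq x (hsub hx)⟩
  · rw [mem_ball_iff, h.hammingDist_eq u' hu'mem x (hsub hx)]
    exact mem_ball_iff.1 hx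
  · have hwu' : hammingDist w (F u') ≤ k := by
      rw [← h.apply_center hn, h.hammingDist_eq u (by simp) u' hu'mem]
      exact hu'
    have hy' : y ∈ ball n w (r + k) := by
      have := hammingDist_triangle w (F u') y
      simp only [mem_ball_iff] at hy ⊢
      omega
    obtain ⟨x, hx, rfl⟩ := h.surjOn hy'
    refine ⟨x, ?_, rfl⟩
    rw [mem_ball_iff, ← h.hammingDist_eq u' hu'mem x hx]
    exact mem_ball_iff.1 hy

lemma exists_perm (h : IsColouredBallIso χ lam 2 u w F) (hn : 4 ≤ n) :
    ∃ σ : Equiv.Perm (Fin n), ∀ s : Finset (Fin n), #s = 2 →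
      χ (flipSet u s) = lam (flipSet w (s.map σ.toEmbedding)) := by
  choose T hT using fun s => exists_flipSet_eq w (F (flipSet u s))
  have hmem : ∀ {s : Finset (Fin n)}, #s ≤ 2 → flipSet u s ∈ ball n u 2 := fun hs => by
    rwa [mem_ball_iff, hammingDist_flipSet]
  have hdist : ∀ s t, #s ≤ 2 → #t ≤ 2 → #(T s ∆ T t) = #(s ∆ t) := fun s t hs ht => by
    rw [← hammingDist_flipSet_flipSet w, hT, hT, h.hammingDist_eq _ (hmem hs) _ (hmem ht),
      hammingDist_flipSet_flipSet]
  have hT₀ : T ∅ = ∅ := flipSet_injective w (by rw [hT, flipSet_empty, flipSet_empty,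
    h.apply_center (by omega)])
  have hcard : ∀ s, #s ≤ 2 → #(T s) = #s := fun s hs => by
    have := hdist s ∅ hs (by simp)
    rwa [hT₀, ← Finset.bot_eq_empty, symmDiff_bot, symmDiff_bot] at this
  choose τ hτ using fun i : Fin n => card_eq_one.1 (hcard {i} (by simp))
  have hτinj : Function.Injective τ := fun i j hij => by
    have := hdist {i} {j} (by simp) (by simp)
    rwa [hτ, hτ, hij, symmDiff_self, Finset.bot_eq_empty, Finset.card_empty, eq_comm,
      Finset.card_eq_zero, Finset.symmDiff_eq_empty, singleton_inj] at this
  refine ⟨Equiv.ofBijective τ (Finite.injective_iff_bijective.1 hτinj), fun s hs => ?_⟩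
  obtain ⟨i, j, hij, rfl⟩ := card_eq_two.1 hs
  -- `T {i, j}` is a pair at distance `1` from both `{τ i}` and `{τ j}`.
  have hpair : ∀ k ∈ ({i, j} : Finset (Fin n)), τ k ∈ T {i, j} := fun k hk => by
    by_contra hk'
    have h₁ := hdist {i, j} {k} hs.le (by simp)
    have h₂ := card_symmDiff_singleton_add_one hk
    rw [hτ, card_symmDiff_singleton hk', hcard _ hs.le] at h₁
    omega
  have hTij : T {i, j} = {τ i, τ j} := by
    refine (Finset.eq_of_subset_of_card_le (insert_subset_iff.2 ⟨hpair i (by simp),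
      singleton_subset_iff.2 (hpair j (by simp))⟩) ?_).symm
    rw [hcard _ hs.le, hs, card_pair (hτinj.ne hij)]
  rw [h.colour_eq _ (hmem hs.le), ← hT, hTij]
  simp

end IsColouredBallIso

def secondSpheresMatch (u u' : V n) (σ : Equiv.Perm (Fin n)) : Set (V n → C) :=
  {χ | ∀ s : Finset (Fin n), #s = 2 →
    χ (flipSet u s) = χ (flipSet u' (s.map σ.toEmbedding))}

def SecondSpheresDistinct (χ : V n → C) : Prop :=
  ∀ u u' : V n, u ≠ u' → ∀ σ : Equiv.Perm (Fin n), χ ∉ secondSpheresMatch u u' σ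

lemma SecondSpheresDistinct.eq_of_isColouredBallIso {χ lam : V n → C}
    (hχ : SecondSpheresDistinct χ) (hn : 4 ≤ n) {u u' w : V n} {F G : V n → V n}
    (hF : IsColouredBallIso χ lam 2 u w F) (hG : IsColouredBallIso χ lam 2 u' w G) : u = u' := by
  by_contra hne
  obtain ⟨σ, hσ⟩ := hF.exists_perm hn
  obtain ⟨σ', hσ'⟩ := hG.exists_perm hn
  refine hχ u u' hne (σ.trans σ'.symm) fun s hs => ?_
  have hmap :
      (s.map (σ.trans σ'.symm).toEmbedding).map σ'.toEmbedding = s.map σ.toEmbedding := by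
    rw [Finset.map_map]
    congr 1
    ext
    simp
  rw [hσ s hs, hσ' _ (by rw [card_map, hs]), hmap]

theorem SecondSpheresDistinct.distinguishable (hn : 6 ≤ n) {χ : V n → C}
    (hχ : SecondSpheresDistinct χ) : Distinguishable n 3 χ := by
  rintro lam ⟨f, hf⟩
  choose F hF using fun v => LocallyEq.exists_isColouredBallIso (hf v)
  have hcentre : ∀ v, F v v = f v := fun v => (hF v).apply_center (by omega)
  have hlocal : ∀ v u, hammingDist v u ≤ 1 → F v u = f u := by
    intro v u hvu
    set u' := f.symm (F v u)
    have h₁ : IsColouredBallIso χ lam 2 u (F v u) (F v) :=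
      (hF v).restrict (r := 2) (k := 1) (by omega) hvu
    have h₂ : IsColouredBallIso χ lam 2 u' (F v u) (F u') := by
      have := (hF u').restrict (r := 2) (k := 1) (by omega) (u' := u') (by simp)
      rwa [hcentre, f.apply_symm_apply] at this
    exact ((congrArg f (hχ.eq_of_isColouredBallIso (by omega) h₁ h₂)).trans
      (f.apply_symm_apply _)).symm
  have hadj : ∀ {u v}, (Q n).Adj (f u) (f v) ↔ (Q n).Adj u v := by
    intro u v
    rw [Q_adj_iff, Q_adj_iff, hammingDist_comm (f u), hammingDist_comm u]
    constructor
    · intro h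
      obtain ⟨x, hx, hxu⟩ := (hF v).surjOn (mem_ball_iff.2 (by omega) : f u ∈ ball n (f v) 3)
      have hvx : hammingDist v x = 1 := by
        rw [← (hF v).hammingDist_eq v (by simp) x hx, hcentre, hxu, h]
      rw [← f.injective ((hlocal v x hvx.le).symm.trans hxu)]
      exact hvx
    · intro h
      rw [← hlocal v u h.le, ← hcentre v,
        (hF v).hammingDist_eq v (by simp) u (by simp; omega), h]
  refine ⟨⟨f, hadj⟩, funext fun y => ?_⟩
  have := (hF (f.symm y)).colour_eq (f.symm y) (by simp)
  rw [hcentre, f.apply_symm_apply] at this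
  exact this.symm

end Colourings

section Probability

variable {p : ℝ}

lemma bern_singleton_false : bern p {false} = ENNReal.ofReal p := by
  simp [bern]

lemma bern_singleton_true : bern p {true} = ENNReal.ofReal (1 - p) := by
  simp [bern]

instance : IsFiniteMeasure (bern p) :=
  ⟨by simp [bern, ENNReal.add_lt_top]⟩

lemma isProbabilityMeasure_colMeasure (hp0 : 0 ≤ p) (hp1 : p ≤ 1) :
    IsProbabilityMeasure (colMeasure n p) := by
  have : IsProbabilityMeasure (bern p) :=
    ⟨by simp [bern, ← ENNReal.ofReal_add hp0 (sub_nonneg.2 hp1)]⟩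
  unfold colMeasure
  infer_instance

def flipColour (a : V n) (χ : V n → Bool) : V n → Bool := Function.update χ a (!χ a)

lemma flipColour_involutive (a : V n) : Function.Involutive (flipColour a) := fun χ => by
  ext v
  by_cases hv : v = a
  · subst hv; simp [flipColour]
  · simp [flipColour, hv]

lemma ofReal_mul_bern_le (hp0 : 0 ≤ p) (hp2 : p ≤ 1 / 2) (c : Bool) :
    ENNReal.ofReal p * bern p {c} ≤ ENNReal.ofReal (1 - p) * bern p {!c} := by
  cases c <;>
  · simp only [Bool.not_false, Bool.not_true, bern_singleton_false, bern_singleton_true,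
      ← ENNReal.ofReal_mul hp0, ← ENNReal.ofReal_mul (by linarith : (0 : ℝ) ≤ 1 - p)]
    exact ENNReal.ofReal_le_ofReal (by nlinarith)

lemma ofReal_mul_colMeasure_singleton_le (hp0 : 0 ≤ p) (hp2 : p ≤ 1 / 2) (a : V n)
    (χ : V n → Bool) :
    ENNReal.ofReal p * colMeasure n p {χ} ≤
      ENNReal.ofReal (1 - p) * colMeasure n p {flipColour a χ} := by
  have hrest :
      ∏ v ∈ univ.erase a, bern p {flipColour a χ v} = ∏ v ∈ univ.erase a, bern p {χ v} :=
    prod_congr rfl fun v hv => by simp [flipColour, (mem_erase.1 hv).1]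
  simp only [colMeasure, Measure.pi_singleton]
  rw [← mul_prod_erase univ _ (mem_univ a), ← mul_prod_erase univ _ (mem_univ a), hrest,
    ← mul_assoc, ← mul_assoc]
  refine mul_le_mul' ?_ le_rfl
  simpa [flipColour] using ofReal_mul_bern_le hp0 hp2 (χ a)

lemma ofReal_mul_colMeasure_le (hp0 : 0 ≤ p) (hp2 : p ≤ 1 / 2) (a : V n)
    (S : Set (V n → Bool)) :
    ENNReal.ofReal p * colMeasure n p S ≤
      ENNReal.ofReal (1 - p) * colMeasure n p (flipColour a '' S) := by
  classical
  rw [← S.coe_toFinset, ← coe_image, ← sum_measure_singleton, ← sum_measure_singleton,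
    sum_image fun _ _ _ _ h => (flipColour_involutive a).injective h, mul_sum, mul_sum]
  exact sum_le_sum fun χ _ => ofReal_mul_colMeasure_singleton_le hp0 hp2 a χ

lemma colMeasure_inter_eq_le (hp0 : 0 ≤ p) (hp2 : p ≤ 1 / 2) {A : Set (V n → Bool)}
    {a b : V n} (hab : a ≠ b) (hA : ∀ χ ∈ A, flipColour a χ ∈ A) :
    colMeasure n p (A ∩ {χ | χ a = χ b}) ≤ ENNReal.ofReal (1 - p) * colMeasure n p A := by
  set B : Set (V n → Bool) := {χ | χ a = χ b}
  have himage : flipColour a '' (A ∩ B) ⊆ A \ B := by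
    rintro _ ⟨χ, ⟨hχA, hχB⟩, rfl⟩
    refine ⟨hA χ hχA, fun h => ?_⟩
    have h : flipColour a χ a = flipColour a χ b := h
    rw [flipColour, Function.update_self, Function.update_of_ne hab.symm, ← hχB] at h
    simp at h
  calc colMeasure n p (A ∩ B)
      = ENNReal.ofReal p * colMeasure n p (A ∩ B) +
          ENNReal.ofReal (1 - p) * colMeasure n p (A ∩ B) := by
        rw [← add_mul, ← ENNReal.ofReal_add hp0 (by linarith)]
        simp
    _ ≤ ENNReal.ofReal (1 - p) * colMeasure n p (A \ B) +
          ENNReal.ofReal (1 - p) * colMeasure n p (A ∩ B) := by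
        refine add_le_add_left ((ofReal_mul_colMeasure_le hp0 hp2 a _).trans ?_) _
        exact mul_le_mul' le_rfl (measure_mono himage)
    _ = ENNReal.ofReal (1 - p) * colMeasure n p A := by
        rw [← mul_add, add_comm, measure_inter_add_sdiff _ MeasurableSet.of_discrete]

/-- Equalities along vertex-disjoint pairs are independent events, each of probability
`p² + (1 - p)² ≤ 1 - p`. -/
lemma colMeasure_forall_eq_le {ι : Type*} [DecidableEq ι] (hp0 : 0 ≤ p) (hp2 : p ≤ 1 / 2)
    (M : Finset ι) (l r : ι → V n) (hl : Set.InjOn l M)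
    (hlr : ∀ q ∈ M, ∀ q' ∈ M, l q ≠ r q') :
    colMeasure n p {χ | ∀ q ∈ M, χ (l q) = χ (r q)} ≤ ENNReal.ofReal (1 - p) ^ #M := by
  induction M using Finset.induction_on with
  | empty =>
    have := isProbabilityMeasure_colMeasure (n := n) hp0 (by linarith)
    simp
  | @insert q M hqM ih =>
    have hset : {χ : V n → Bool | ∀ q' ∈ insert q M, χ (l q') = χ (r q')} =
        {χ | ∀ q' ∈ M, χ (l q') = χ (r q')} ∩ {χ | χ (l q) = χ (r q)} := by
      ext χ
      simp [and_comm]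
    have hinv : ∀ χ ∈ {χ : V n → Bool | ∀ q' ∈ M, χ (l q') = χ (r q')},
        flipColour (l q) χ ∈ {χ : V n → Bool | ∀ q' ∈ M, χ (l q') = χ (r q')} := by
      intro χ hχ q' hq'
      have hll : l q' ≠ l q := fun h => hqM (hl (by simp [hq']) (by simp) h ▸ hq')
      have hrl : r q' ≠ l q := (hlr q (by simp) q' (by simp [hq'])).symm
      simpa [flipColour, hll, hrl] using hχ q' hq'
    rw [hset, card_insert_of_notMem hqM, pow_succ']
    calc _ ≤ ENNReal.ofReal (1 - p) * colMeasure n p {χ | ∀ q' ∈ M, χ (l q') = χ (r q')} :=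
          colMeasure_inter_eq_le hp0 hp2 (hlr q (by simp) q (by simp)) hinv
      _ ≤ _ := by
          gcongr
          exact ih (hl.mono (by simp)) fun q hq q' hq' => hlr q (by simp [hq]) q' (by simp [hq'])

lemma eq_symmDiff_of_flipSet_eq {x : V n} {D s t : Finset (Fin n)}
    (h : flipSet x s = flipSet (flipSet x D) t) : D = s ∆ t := by
  rw [flipSet_flipSet] at h
  rw [flipSet_injective x h, symmDiff_symmDiff_cancel_right]

/-- The pairs of coordinates whose constraint `χ (flipSet u s) = χ (flipSet u' (σ s))` is
trivial all meet the (at most four) coordinates where `u` and `u'` differ. -/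
lemma exists_card_ge_forall_flipSet_ne {u u' : V n} (hu : u ≠ u') (σ : Equiv.Perm (Fin n)) :
    ∃ K : Finset (Fin n), n - 4 ≤ #K ∧
      ∀ s ⊆ K, #s = 2 → flipSet u s ≠ flipSet u' (s.map σ.toEmbedding) := by
  obtain ⟨D, rfl⟩ := exists_flipSet_eq u u'
  have hD : D ≠ ∅ := by rintro rfl; simp at hu
  by_cases hD4 : #D ≤ 4
  · refine ⟨univ \ D, by rw [card_sdiff_of_subset (subset_univ D)]; simp; omega,
      fun s hsK hs h => hD ?_⟩
    have hDst := eq_symmDiff_of_flipSet_eq h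
    have hst : s ⊆ s.map σ.toEmbedding := fun i hi => by
      by_contra hi'
      have : i ∈ D := hDst ▸ mem_symmDiff.2 (Or.inl ⟨hi, hi'⟩)
      exact (mem_sdiff.1 (hsK hi)).2 this
    rw [hDst, Finset.symmDiff_eq_empty]
    exact Finset.eq_of_subset_of_card_le hst (by rw [card_map])
  · refine ⟨univ, by simp, fun s _ hs h => hD4 ?_⟩
    rw [eq_symmDiff_of_flipSet_eq h]
    calc #(s ∆ s.map σ.toEmbedding) ≤ #(s ∪ s.map σ.toEmbedding) :=
          card_le_card symmDiff_subset_union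
      _ ≤ 4 := (Finset.card_union_le _ _).trans (by rw [card_map, hs])

lemma mul_div_seven_le_choose (hn : 70 ≤ n) : 3 * (n * n / 7) ≤ (n - 4).choose 2 := by
  rw [Nat.choose_two_right, Nat.le_div_iff_mul_le two_pos]
  have h7 := Nat.div_mul_le_self (n * n) 7
  obtain ⟨m, rfl⟩ : ∃ m, n = m + 70 := ⟨n - 70, by omega⟩
  simp only [show m + 70 - 4 = m + 66 by omega, show m + 66 - 1 = m + 65 by omega]
  nlinarith

lemma colMeasure_secondSpheresMatch_le (hp0 : 0 ≤ p) (hp2 : p ≤ 1 / 2) (hn : 70 ≤ n)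
    {u u' : V n} (hu : u ≠ u') (σ : Equiv.Perm (Fin n)) :
    colMeasure n p (secondSpheresMatch u u' σ) ≤
      ENNReal.ofReal (1 - p) ^ (n * n / 7) := by
  obtain ⟨K, hK, hKne⟩ := exists_card_ge_forall_flipSet_ne hu σ
  set l : Finset (Fin n) → V n := flipSet u
  set r : Finset (Fin n) → V n := fun s => flipSet u' (s.map σ.toEmbedding)
  obtain ⟨M, hMP, hPM, hMlr⟩ := exists_subset_card_le_three_mul (K.powersetCard 2) l r
    (flipSet_injective u).injOn ((flipSet_injective u').comp (map_injective _)).injOn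
    fun s hs => hKne s (mem_powersetCard.1 hs).1 (mem_powersetCard.1 hs).2
  have hM : n * n / 7 ≤ #M := by
    have := Nat.choose_le_choose 2 hK
    rw [card_powersetCard] at hPM
    linarith [mul_div_seven_le_choose hn]
  calc colMeasure n p (secondSpheresMatch u u' σ)
      ≤ colMeasure n p {χ | ∀ s ∈ M, χ (l s) = χ (r s)} :=
        measure_mono fun χ hχ s hs => hχ s (mem_powersetCard.1 (hMP hs)).2
    _ ≤ ENNReal.ofReal (1 - p) ^ #M :=
        colMeasure_forall_eq_le hp0 hp2 M l r (flipSet_injective u).injOn hMlr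
    _ ≤ _ := pow_le_pow_right_of_le_one' (ENNReal.ofReal_le_one.2 (by linarith)) hM

lemma colMeasure_not_secondSpheresDistinct_le (hp0 : 0 ≤ p) (hp2 : p ≤ 1 / 2) (hn : 70 ≤ n) :
    colMeasure n p {χ | ¬ SecondSpheresDistinct χ} ≤
      (2 ^ n * 2 ^ n * n.factorial : ℕ) * ENNReal.ofReal (1 - p) ^ (n * n / 7) := by
  classical
  let I := (univ : Finset (V n × V n × Equiv.Perm (Fin n))).filter fun t => t.1 ≠ t.2.1
  calc _ ≤ colMeasure n p (⋃ t ∈ I, secondSpheresMatch t.1 t.2.1 t.2.2) := by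
        refine measure_mono fun χ hχ => ?_
        simp only [SecondSpheresDistinct, not_forall, not_not] at hχ
        obtain ⟨u, u', hu, σ, hσ⟩ := hχ
        exact Set.mem_biUnion (x := (u, u', σ)) (by simp [I, hu]) hσ
    _ ≤ ∑ t ∈ I, ENNReal.ofReal (1 - p) ^ (n * n / 7) :=
        (measure_biUnion_finset_le _ _).trans (sum_le_sum fun t ht =>
          colMeasure_secondSpheresMatch_le hp0 hp2 hn (mem_filter.1 ht).2 _)
    _ ≤ _ := by
        rw [sum_const, nsmul_eq_mul]
        gcongr
        refine (card_filter_le _ _).trans (le_of_eq ?_)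
        simp [Fintype.card_perm, mul_assoc]

end Probability

lemma natCast_mul_one_sub_pow_le_exp_neg {q : ℝ} (hn : 3 ≤ n) (hq0 : 0 ≤ q)
    (hq1 : q ≤ 1) (hq : 35 * Real.log n ≤ n * q) :
    ((2 ^ n * 2 ^ n * n.factorial : ℕ) : ℝ) * (1 - q) ^ (n * n / 7) ≤ Real.exp (-n) := by
  set k := n * n / 7
  set L := Real.log n
  have hx : (3 : ℝ) ≤ n := by exact_mod_cast hn
  have hL : 1 ≤ L := by
    rw [Real.le_log_iff_exp_le (by linarith)]
    linarith [Real.exp_one_lt_d9]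
  have hk : (n : ℝ) * n / 7 - 1 ≤ k := by
    have : ((n * n : ℕ) : ℝ) < 7 * ((k : ℕ) + 1 : ℕ) := by exact_mod_cast (by omega)
    push_cast at this
    linarith
  have hcount : ((2 ^ n * 2 ^ n * n.factorial : ℕ) : ℝ) ≤ Real.exp (3 * n * L) := by
    have h : 2 ^ n * 2 ^ n * n.factorial ≤ n ^ n * n ^ n * n ^ n :=
      Nat.mul_le_mul (Nat.mul_le_mul (Nat.pow_le_pow_left (by omega) n)
        (Nat.pow_le_pow_left (by omega) n)) n.factorial_le_pow
    calc _ ≤ ((n ^ n * n ^ n * n ^ n : ℕ) : ℝ) := by exact_mod_cast h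
      _ = Real.exp (3 * n * L) := by
        rw [show 3 * (n : ℝ) * L = (3 * n : ℕ) * L by push_cast; ring, Real.exp_nat_mul,
          Real.exp_log (by linarith)]
        push_cast
        ring
  have hpow : (1 - q) ^ k ≤ Real.exp (-(q * k)) := by
    calc (1 - q) ^ k ≤ Real.exp (-q) ^ k :=
          pow_le_pow_left₀ (by linarith) (Real.one_sub_le_exp_neg q) k
      _ = Real.exp (-(q * k)) := by rw [← Real.exp_nat_mul]; ring_nf
  calc _ ≤ Real.exp (3 * n * L) * Real.exp (-(q * k)) :=
        mul_le_mul hcount hpow (by positivity) (by positivity)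
    _ = Real.exp (3 * n * L - q * k) := by rw [← Real.exp_add]; ring_nf
    _ ≤ Real.exp (-n) := by
      rw [Real.exp_le_exp]
      -- `q k ≥ (n q) n / 7 - q ≥ 5 n L - 1`
      have h₁ : q * (n * n / 7 - 1) ≤ q * k := mul_le_mul_of_nonneg_left hk hq0
      have h₂ : 35 * L * (n / 7) ≤ n * q * (n / 7) :=
        mul_le_mul_of_nonneg_right hq (by positivity)
      nlinarith

lemma tendsto_colMeasure_not_secondSpheresDistinct (p : ℕ → ℝ)
    (hp : ∀ n, p n ∈ Set.Ioc (0 : ℝ) (1 / 2))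
    (hgrow : Tendsto (fun n : ℕ => (n : ℝ) * p n / Real.log n) atTop atTop) :
    Tendsto (fun n => colMeasure n (p n) {χ | ¬ SecondSpheresDistinct χ}) atTop (𝓝 0) := by
  have hexp : Tendsto (fun n : ℕ => ENNReal.ofReal (Real.exp (-n))) atTop (𝓝 0) := by
    simpa using ENNReal.tendsto_ofReal
      (Real.tendsto_exp_neg_atTop_nhds_zero.comp tendsto_natCast_atTop_atTop)
  refine tendsto_of_tendsto_of_tendsto_of_le_of_le' tendsto_const_nhds hexp
    (Eventually.of_forall fun _ => zero_le) ?_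
  filter_upwards [hgrow.eventually_ge_atTop 35, eventually_ge_atTop 70] with n hpn hn
  have hL : 0 < Real.log n := Real.log_pos (by exact_mod_cast (by omega : 1 < n))
  have hp1 : 0 ≤ 1 - p n := by linarith [(hp n).2]
  refine (colMeasure_not_secondSpheresDistinct_le (hp n).1.le (hp n).2 hn).trans ?_
  rw [← ENNReal.ofReal_natCast, ← ENNReal.ofReal_pow hp1,
    ← ENNReal.ofReal_mul (by positivity)]
  exact ENNReal.ofReal_le_ofReal (natCast_mul_one_sub_pow_le_exp_neg (by omega) (hp n).1.le
    (by linarith) (by rwa [le_div_iff₀ hL] at hpn))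

end Hypercube

/-- Theorem 1.4 (soft): for `p(n) ∈ (0,1/2]` with `n·p(n)/log n → ∞`, a random
`(p,1-p)`-colouring of `Q_n` is with high probability `3`-distinguishable. -/
theorem random_two_colouring_three_distinguishable
    (p : ℕ → ℝ)
    (hp : ∀ n, p n ∈ Set.Ioc (0 : ℝ) (1 / 2))
    (hgrow : Tendsto (fun n : ℕ => (n : ℝ) * p n / Real.log n) atTop atTop) :
    Tendsto (fun n => colMeasure n (p n) {χ | Distinguishable n 3 χ}) atTop (𝓝 1) := by
  have hprob : ∀ n, IsProbabilityMeasure (colMeasure n (p n)) := fun n =>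
    Hypercube.isProbabilityMeasure_colMeasure (hp n).1.le (by linarith [(hp n).2])
  have hgood : Tendsto
      (fun n => 1 - colMeasure n (p n) {χ | ¬ Hypercube.SecondSpheresDistinct χ})
      atTop (𝓝 1) := by
    simpa using ENNReal.Tendsto.sub tendsto_const_nhds
      (Hypercube.tendsto_colMeasure_not_secondSpheresDistinct p hp hgrow)
      (Or.inl ENNReal.one_ne_top)
  refine tendsto_of_tendsto_of_tendsto_of_le_of_le' hgood tendsto_const_nhds ?_
    (Eventually.of_forall fun _ => prob_le_one)
  filter_upwards [eventually_ge_atTop 6] with n hn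
  rw [← prob_compl_eq_one_sub MeasurableSet.of_discrete]
  exact measure_mono fun χ hχ =>
    Hypercube.SecondSpheresDistinct.distinguishable hn (not_not.1 hχ)

end
end

section
/- Let s : ℕ → ℕ be a function with s(n) → ∞ and s(n) = o(n) as n → ∞. Then there exists a constant C > 0 (which may depend on s) such that for all sufficiently large n the following holds: if A ⊆ V(Q_n) with |A| = n and |Γ(A)| ≤ binom(n,2) + n·s(n), then there exists a vertex w ∈ V(Q_n) for which |Γ(w) ∩ A| ≥ n − C·s(n). -/
open MeasureTheory Filter Set Asymptotics Topology

noncomputable section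

/-!
Let `w` maximise `Δ = |Γ(w) ∩ A|`, and split `A` into `B = A ∩ Γ(w)` and `K = A \ Γ(w)`, `k = |K|`.
Two distinct vertices of `Q_n` have common neighbours only at distance 2, and then exactly two.
So if `P` counts the ordered pairs of `A` at distance 2, Bonferroni gives `|Γ(A)| ≥ n|A| - P`,
whence `P ≥ (1/2 - o(1)) n²`, while Cauchy–Schwarz over the cherries gives
`P² ≤ n((2Δ + 1)P + 6n²)`; together `Δ ≥ (1/4 - o(1)) n`. On the other side, `Γ(B)` contains all
but `C(k, 2)` of the `C(n, 2)` vertices at distance 2 from `w` and meets `Γ(K)` in at most `6k`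
vertices, so `|Γ(K)| ≤ ns + 6k + k²/2`; Cauchy–Schwarz over the degrees into `K` gives
`(nk)² ≤ |Γ(K)| (nk + 2k²)`. Since `k ≤ (3/4 + o(1)) n`, these two bounds force `k = O(s)`.
-/

open Finset

lemma Finset.card_symmDiff_add_two_mul_card_inter {α : Type*} [DecidableEq α] (s t : Finset α) :
    #(symmDiff s t) + 2 * #(s ∩ t) = #s + #t := by
  rw [symmDiff_def, Finset.sup_eq_union,
    Finset.card_union_of_disjoint disjoint_sdiff_sdiff, ← Finset.card_sdiff_add_card_inter s t,
    ← Finset.card_sdiff_add_card_inter t s, Finset.inter_comm t s]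
  ring

lemma Finset.sum_card_filter_sq {α β : Type*} (X : Finset α) (A : Finset β) (r : α → β → Prop)
    [∀ x a, Decidable (r x a)] :
    ∑ x ∈ X, #{a ∈ A | r x a} ^ 2 = ∑ u ∈ A, ∑ v ∈ A, #{x ∈ X | r x u ∧ r x v} := by
  simp_rw [Finset.card_filter, sq, Finset.sum_mul_sum, ite_zero_mul_ite_zero, mul_one]
  rw [Finset.sum_comm]
  refine Finset.sum_congr rfl fun u _ => ?_
  rw [Finset.sum_comm]

lemma six_mul_le_of_sq_le {n E Δ : ℝ} (hn : 1000 ≤ n) (hE : 499 / 1000 * n ^ 2 ≤ E)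
    (h : E ^ 2 ≤ n * ((2 * Δ + 1) * E + 6 * n ^ 2)) : 6 * n ≤ 25 * Δ := by
  -- if `25Δ < 6n` then `E - n(2Δ + 1) ≥ 0.018 n²`, and `E (E - n(2Δ + 1)) ≥ 0.008 n⁴ > 6n³`
  by_contra! hΔ
  have hgap : 18 / 1000 * n ^ 2 ≤ E - n * (2 * Δ + 1) := by nlinarith
  have hprod : 499 / 1000 * n ^ 2 * (18 / 1000 * n ^ 2) ≤ E * (E - n * (2 * Δ + 1)) :=
    mul_le_mul hE hgap (by positivity) (by linarith [sq_nonneg n])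
  nlinarith [mul_le_mul_of_nonneg_right hn (by positivity : (0 : ℝ) ≤ n ^ 3)]

lemma le_hundred_mul_of_sq_le {n k s : ℝ} (hn : 10 ^ 4 ≤ n) (hs : 0 ≤ s) (hk0 : 0 ≤ k)
    (hk : 25 * k ≤ 19 * n)
    (h : (n * k) ^ 2 ≤ (n * s + 6 * k + k ^ 2 / 2) * (n * k + 2 * k ^ 2)) : k ≤ 100 * s := by
  rcases hk0.eq_or_lt with rfl | hkpos
  · linarith
  have hn0 : 0 < n := by linarith
  have hk' : k ≤ 19 / 25 * n := by linarith
  have hdiv : n ^ 2 * k ≤ (n * s + 6 * k + k ^ 2 / 2) * (n + 2 * k) := by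
    have : k * (n ^ 2 * k) ≤ k * ((n * s + 6 * k + k ^ 2 / 2) * (n + 2 * k)) := by nlinarith
    exact le_of_mul_le_mul_left this hkpos
  -- `k ≤ 19n/25` is what keeps this term below `n²k`
  have hk_term : k ^ 2 / 2 * (n + 2 * k) ≤ 9576 / 10000 * n ^ 2 * k := by
    nlinarith [mul_le_mul_of_nonneg_left hk' (by positivity : 0 ≤ k * n),
      mul_le_mul_of_nonneg_left hk' (sq_nonneg k)]
  have hs_term : n * s * (n + 2 * k) ≤ 252 / 100 * n ^ 2 * s := by
    nlinarith [mul_le_mul_of_nonneg_left hk' (by positivity : 0 ≤ n * s)]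
  have hlin_term : 6 * k * (n + 2 * k) ≤ 18 * n * k := by
    nlinarith [mul_le_mul_of_nonneg_left (by linarith : k ≤ n) hk0]
  have hscaled : n ^ 2 * (406 / 10000 * k) ≤ n ^ 2 * (252 / 100 * s) := by
    nlinarith [mul_le_mul_of_nonneg_right hn (by positivity : 0 ≤ n * k)]
  linarith [le_of_mul_le_mul_left hscaled (by positivity)]

namespace Hypercube

variable {n : ℕ}

def diffSet (u v : V n) : Finset (Fin n) := {i | u i ≠ v i}

lemma card_diffSet (u v : V n) : #(diffSet u v) = hammingDist u v := rfl

lemma diffSet_comm (u v : V n) : diffSet u v = diffSet v u := by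
  simp only [diffSet, ne_comm]

lemma diffSet_eq_empty {u v : V n} : diffSet u v = ∅ ↔ u = v := by
  rw [← card_eq_zero, card_diffSet, hammingDist_eq_zero]

lemma symmDiff_diffSet (u w v : V n) :
    symmDiff (diffSet u w) (diffSet w v) = diffSet u v := by
  ext i
  simp only [diffSet, Finset.mem_symmDiff, Finset.mem_filter, Finset.mem_univ, true_and]
  cases u i <;> cases w i <;> cases v i <;> simp

-- `flipAt w` inverts `diffSet · w`: together they identify `V n` with `Finset (Fin n)`, `w ↦ ∅`.
def flipAt (w : V n) (S : Finset (Fin n)) : V n := fun i => if i ∈ S then !w i else w i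

@[simp] lemma diffSet_flipAt (w : V n) (S : Finset (Fin n)) : diffSet (flipAt w S) w = S := by
  ext i
  by_cases h : i ∈ S <;> simp [diffSet, flipAt, h]

@[simp] lemma flipAt_diffSet (u w : V n) : flipAt w (diffSet u w) = u := by
  funext i
  by_cases h : u i = w i
  · simp [flipAt, diffSet, h]
  · simpa [flipAt, diffSet, h] using (Bool.eq_not_of_ne h).symm

lemma flipAt_injective (w : V n) : Function.Injective (flipAt w) :=
  Function.LeftInverse.injective (g := (diffSet · w)) (diffSet_flipAt w)

def nbr (v : V n) : Finset (V n) := {u | hammingDist u v = 1}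

lemma mem_nbr {u v : V n} : u ∈ nbr v ↔ hammingDist u v = 1 := by
  simp [nbr]

lemma mem_nbr_comm {u v : V n} : u ∈ nbr v ↔ v ∈ nbr u := by
  rw [mem_nbr, mem_nbr, hammingDist_comm]

lemma coe_nbr (v : V n) : (nbr v : Set (V n)) = nbhd n v := by
  ext u
  simp only [Finset.mem_coe, mem_nbr, nbhd, Q, SimpleGraph.mem_neighborSet,
    SimpleGraph.fromRel_adj, hammingDist_comm v u, or_self]
  exact ⟨fun h => ⟨fun hvu => by simp [hvu] at h, h⟩, And.right⟩

lemma mem_nbr_iff_eq_flipAt {u v : V n} : u ∈ nbr v ↔ ∃ i, u = flipAt v {i} := by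
  rw [mem_nbr, ← card_diffSet, card_eq_one]
  constructor
  · rintro ⟨i, hi⟩
    exact ⟨i, by rw [← hi, flipAt_diffSet]⟩
  · rintro ⟨i, rfl⟩
    exact ⟨i, diffSet_flipAt v {i}⟩

lemma card_nbr (v : V n) : #(nbr v) = n := by
  have : nbr v = Finset.univ.image fun i => flipAt v {i} := by
    ext u
    simp [mem_nbr_iff_eq_flipAt, eq_comm]
  rw [this, Finset.card_image_of_injective _ fun i j h =>
    Finset.singleton_injective (flipAt_injective v h)]
  simp

lemma exists_mem_diffSet_of_mem_nbr_inter {a b x : V n} (hab : a ≠ b)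
    (hx : x ∈ nbr a ∩ nbr b) : hammingDist a b = 2 ∧ ∃ p ∈ diffSet a b, x = flipAt a {p} := by
  rw [Finset.mem_inter, mem_nbr, mem_nbr, ← card_diffSet, ← card_diffSet, card_eq_one,
    card_eq_one] at hx
  obtain ⟨⟨p, hp⟩, ⟨q, hq⟩⟩ := hx
  have hpq : p ≠ q := by
    rintro rfl
    apply hab
    rw [← diffSet_eq_empty, ← symmDiff_diffSet a x b, diffSet_comm a x, hp, hq, symmDiff_self]
    rfl
  have hab2 : diffSet a b = {p} ∪ {q} := by
    rw [← symmDiff_diffSet a x b, diffSet_comm a x, hp, hq,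
      (Finset.disjoint_singleton.2 hpq).symmDiff_eq_sup]
    rfl
  refine ⟨?_, p, by simp [hab2], by rw [← hp, flipAt_diffSet]⟩
  rw [← card_diffSet, hab2, Finset.card_union_of_disjoint (Finset.disjoint_singleton.2 hpq)]
  simp

lemma card_nbr_inter_nbr_le {a b : V n} (hab : a ≠ b) :
    #(nbr a ∩ nbr b) ≤ if hammingDist a b = 2 then 2 else 0 := by
  rcases (nbr a ∩ nbr b).eq_empty_or_nonempty with h | ⟨x, hx⟩
  · simp [h]
  have h2 := (exists_mem_diffSet_of_mem_nbr_inter hab hx).1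
  calc #(nbr a ∩ nbr b) ≤ #((diffSet a b).image fun p => flipAt a {p}) := by
        refine card_le_card fun y hy => ?_
        obtain ⟨-, p, hp, rfl⟩ := exists_mem_diffSet_of_mem_nbr_inter hab hy
        exact mem_image_of_mem _ hp
    _ ≤ #(diffSet a b) := card_image_le
    _ = _ := by rw [card_diffSet, if_pos h2, h2]

lemma exists_nbr_of_dist_two {u v x : V n} (huv : hammingDist u v = 2)
    (hux : hammingDist u x = 2) (hvx : hammingDist v x = 2) :
    ∃ c ∈ nbr u ∩ nbr v, x ∈ nbr c := by
  have hcard := card_symmDiff_add_two_mul_card_inter (diffSet v u) (diffSet u x)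
  rw [symmDiff_diffSet, card_diffSet, card_diffSet, card_diffSet, hvx, hux,
    hammingDist_comm, huv] at hcard
  obtain ⟨i, hi⟩ : (diffSet v u ∩ diffSet u x).Nonempty := by
    rw [← Finset.card_pos]
    omega
  rw [Finset.mem_inter] at hi
  have hiu : diffSet (flipAt u {i}) u = {i} := diffSet_flipAt u {i}
  refine ⟨flipAt u {i}, ?_, ?_⟩
  · rw [Finset.mem_inter, mem_nbr, mem_nbr, ← card_diffSet, ← card_diffSet,
      ← symmDiff_diffSet _ u v, hiu, symmDiff_of_le (by simpa [diffSet_comm] using hi.1),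
      Finset.card_sdiff_of_subset (by simpa [diffSet_comm] using hi.1), card_diffSet, huv]
    simp
  · rw [mem_nbr, ← card_diffSet, ← symmDiff_diffSet x u, diffSet_comm u, hiu,
      symmDiff_of_ge (by simpa [diffSet_comm] using hi.2),
      Finset.card_sdiff_of_subset (by simpa [diffSet_comm] using hi.2), card_diffSet,
      hammingDist_comm, hux]
    simp

lemma card_filter_dist_two_le_six (A : Finset (V n)) {u v : V n} (huv : u ≠ v)
    (h2 : hammingDist u v ≠ 2) :
    #{x ∈ A | hammingDist x u = 2 ∧ hammingDist x v = 2} ≤ 6 := by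
  have key : ∀ x, hammingDist x u = 2 → hammingDist x v = 2 →
      hammingDist u v = 4 ∧ diffSet x u ∈ powersetCard 2 (diffSet u v) := by
    intro x hxu hxv
    have hcard := card_symmDiff_add_two_mul_card_inter (diffSet u x) (diffSet x v)
    rw [symmDiff_diffSet, card_diffSet, card_diffSet, card_diffSet, hammingDist_comm u x, hxu,
      hxv] at hcard
    have h0 : hammingDist u v ≠ 0 := hammingDist_ne_zero.2 huv
    have hdisj : Disjoint (diffSet u x) (diffSet x v) := by
      rw [Finset.disjoint_iff_inter_eq_empty, ← Finset.card_eq_zero]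
      omega
    refine ⟨by omega, Finset.mem_powersetCard.2 ⟨?_, by rw [card_diffSet, hxu]⟩⟩
    rw [← symmDiff_diffSet u x v, hdisj.symmDiff_eq_sup, diffSet_comm]
    exact Finset.subset_union_left
  obtain ⟨x₀, hx₀⟩ | hempty :=
    ({x ∈ A | hammingDist x u = 2 ∧ hammingDist x v = 2}).eq_empty_or_nonempty.symm
  · simp only [Finset.mem_filter] at hx₀
    calc _ ≤ #((powersetCard 2 (diffSet u v)).image (flipAt u)) := by
          refine Finset.card_le_card fun x hx => Finset.mem_image.2 ?_
          simp only [Finset.mem_filter] at hx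
          exact ⟨diffSet x u, (key x hx.2.1 hx.2.2).2, flipAt_diffSet x u⟩
      _ ≤ #(powersetCard 2 (diffSet u v)) := Finset.card_image_le
      _ = 6 := by
          rw [Finset.card_powersetCard, card_diffSet, (key x₀ hx₀.2.1 hx₀.2.2).1]
          rfl
  · simp [hempty]

lemma card_filter_nbr_dist_two_le_three {a w : V n} (h : hammingDist a w ≠ 1) :
    #{b ∈ nbr w | hammingDist a b = 2} ≤ 3 := by
  have key : ∀ b ∈ nbr w, hammingDist a b = 2 →
      hammingDist a w = 3 ∧ ∃ i ∈ diffSet a w, b = flipAt w {i} := by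
    intro b hb hab
    obtain ⟨i, rfl⟩ := mem_nbr_iff_eq_flipAt.1 hb
    have hcard :=
      card_symmDiff_add_two_mul_card_inter (diffSet a w) (diffSet w (flipAt w {i}))
    rw [symmDiff_diffSet, diffSet_comm w, diffSet_flipAt, card_diffSet, card_diffSet, hab,
      Finset.card_singleton] at hcard
    have hle : #(diffSet a w ∩ {i}) ≤ 1 :=
      (Finset.card_le_card Finset.inter_subset_right).trans (Finset.card_singleton i).le
    have hone : #(diffSet a w ∩ {i}) = 1 := by omega
    obtain ⟨j, hj⟩ := Finset.card_pos.1 (hone ▸ Nat.one_pos)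
    rw [Finset.mem_inter, Finset.mem_singleton] at hj
    exact ⟨by omega, i, hj.2 ▸ hj.1, rfl⟩
  obtain ⟨b₀, hb₀⟩ | hempty := ({b ∈ nbr w | hammingDist a b = 2}).eq_empty_or_nonempty.symm
  · simp only [Finset.mem_filter] at hb₀
    calc _ ≤ #((diffSet a w).image fun i => flipAt w {i}) := by
          refine Finset.card_le_card fun b hb => Finset.mem_image.2 ?_
          simp only [Finset.mem_filter] at hb
          obtain ⟨-, i, hi, rfl⟩ := key b hb.1 hb.2
          exact ⟨i, hi, rfl⟩
      _ ≤ #(diffSet a w) := Finset.card_image_le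
      _ = 3 := by rw [card_diffSet, (key b₀ hb₀.1 hb₀.2).1]
  · simp [hempty]

def nbrSet (A : Finset (V n)) : Finset (V n) := A.biUnion nbr

lemma coe_nbrSet (A : Finset (V n)) : (nbrSet A : Set (V n)) = nbhdSet n A := by
  simp [nbrSet, nbhdSet, ← coe_nbr]

def deg (A : Finset (V n)) (w : V n) : ℕ := #{a ∈ A | a ∈ nbr w}

lemma ncard_nbhd_inter (w : V n) (A : Finset (V n)) : (nbhd n w ∩ A).ncard = deg A w := by
  rw [deg, ← Set.ncard_coe_finset, Finset.coe_filter, ← coe_nbr]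
  congr 1
  ext u
  simp [and_comm]

def deg₂ (A : Finset (V n)) (a : V n) : ℕ := #{b ∈ A | hammingDist a b = 2}

def pairs₂ (A : Finset (V n)) : ℕ := ∑ a ∈ A, deg₂ A a

lemma deg_eq_zero_of_notMem_nbrSet {A : Finset (V n)} {w : V n} (hw : w ∉ nbrSet A) :
    deg A w = 0 := by
  rw [deg, Finset.card_eq_zero, Finset.filter_eq_empty_iff]
  exact fun a ha haw => hw (Finset.mem_biUnion.2 ⟨a, ha, mem_nbr_comm.1 haw⟩)

lemma sum_nbrSet_deg_pow (A : Finset (V n)) {k : ℕ} (hk : k ≠ 0) :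
    ∑ w ∈ nbrSet A, deg A w ^ k = ∑ w, deg A w ^ k :=
  Finset.sum_subset (Finset.subset_univ _) fun w _ hw => by
    rw [deg_eq_zero_of_notMem_nbrSet hw, zero_pow hk]

lemma sum_nbrSet_deg (A : Finset (V n)) : ∑ w ∈ nbrSet A, deg A w = n * #A := by
  have h := sum_nbrSet_deg_pow A one_ne_zero
  simp only [pow_one] at h
  rw [h]
  refine (Finset.sum_card_bipartiteAbove_eq_sum_card_bipartiteBelow
    (s := Finset.univ) (t := A) (r := fun w a => a ∈ nbr w)).trans ?_
  simp_rw [Finset.bipartiteBelow, ← mem_nbr_comm, Finset.filter_mem_eq_inter, Finset.univ_inter,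
    card_nbr, Finset.sum_const, smul_eq_mul, mul_comm]

lemma sum_card_nbr_inter_nbr_le {a : V n} {B : Finset (V n)} (ha : a ∉ B) :
    ∑ b ∈ B, #(nbr a ∩ nbr b) ≤ 2 * #{b ∈ B | hammingDist a b = 2} :=
  calc ∑ b ∈ B, #(nbr a ∩ nbr b) ≤ ∑ b ∈ B, if hammingDist a b = 2 then 2 else 0 :=
        Finset.sum_le_sum fun b hb => card_nbr_inter_nbr_le (ne_of_mem_of_not_mem hb ha).symm
    _ = 2 * #{b ∈ B | hammingDist a b = 2} := by
        rw [← Finset.sum_filter, Finset.sum_const, smul_eq_mul, mul_comm]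

lemma sum_nbrSet_deg_sq_le (A : Finset (V n)) :
    ∑ w ∈ nbrSet A, deg A w ^ 2 ≤ n * #A + 2 * pairs₂ A := by
  have hsq : ∑ w, deg A w ^ 2 = ∑ a ∈ A, ∑ b ∈ A, #(nbr a ∩ nbr b) := by
    unfold deg
    rw [Finset.sum_card_filter_sq]
    simp_rw [← mem_nbr_comm, Finset.filter_and, Finset.filter_mem_eq_inter, Finset.univ_inter]
  rw [sum_nbrSet_deg_pow A two_ne_zero, hsq, pairs₂, Finset.mul_sum, mul_comm,
    ← smul_eq_mul, ← Finset.sum_const, ← Finset.sum_add_distrib]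
  refine Finset.sum_le_sum fun a ha => ?_
  rw [← Finset.add_sum_erase _ _ ha, Finset.inter_self, card_nbr, deg₂]
  gcongr
  exact (sum_card_nbr_inter_nbr_le (Finset.notMem_erase a A)).trans
    (by gcongr; exact Finset.erase_subset a A)

lemma mul_card_le_card_nbrSet_add_pairs₂ (A : Finset (V n)) :
    n * #A ≤ #(nbrSet A) + pairs₂ A := by
  -- `3d ≤ d² + 2` on `ℕ`, as `(d - 1)(d - 2) ≥ 0`
  have hpointwise : ∑ w ∈ nbrSet A, 3 * deg A w ≤ ∑ w ∈ nbrSet A, (deg A w ^ 2 + 2) :=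
    Finset.sum_le_sum fun w _ => by
      rcases Nat.lt_or_ge (deg A w) 2 with h | h
      · interval_cases deg A w <;> norm_num
      · nlinarith
  rw [← Finset.mul_sum, sum_nbrSet_deg, Finset.sum_add_distrib, Finset.sum_const,
    smul_eq_mul] at hpointwise
  linarith [sum_nbrSet_deg_sq_le A]

lemma sq_mul_card_le_card_nbrSet_mul (A : Finset (V n)) :
    (n * #A) ^ 2 ≤ #(nbrSet A) * (n * #A + 2 * pairs₂ A) :=
  calc (n * #A) ^ 2 = (∑ w ∈ nbrSet A, deg A w) ^ 2 := by rw [sum_nbrSet_deg]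
    _ ≤ #(nbrSet A) * ∑ w ∈ nbrSet A, deg A w ^ 2 := sq_sum_le_card_mul_sum_sq
    _ ≤ #(nbrSet A) * (n * #A + 2 * pairs₂ A) := by gcongr; exact sum_nbrSet_deg_sq_le A

lemma pairs₂_le_sq (A : Finset (V n)) : pairs₂ A ≤ #A ^ 2 :=
  calc pairs₂ A ≤ ∑ _a ∈ A, #A := Finset.sum_le_sum fun a _ => Finset.card_filter_le _ _
    _ = #A ^ 2 := by rw [Finset.sum_const, smul_eq_mul, sq]

lemma card_filter_dist_two_le_of_dist_two {A : Finset (V n)} {Δ : ℕ} (hΔ : ∀ c, deg A c ≤ Δ)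
    {u v : V n} (huv : hammingDist u v = 2) :
    #{x ∈ A | hammingDist x u = 2 ∧ hammingDist x v = 2} ≤ 2 * Δ :=
  calc _ ≤ #((nbr u ∩ nbr v).biUnion fun c => {x ∈ A | x ∈ nbr c}) := by
        refine Finset.card_le_card fun x hx => ?_
        rw [Finset.mem_filter, hammingDist_comm x, hammingDist_comm x] at hx
        obtain ⟨c, hc, hxc⟩ := exists_nbr_of_dist_two huv hx.2.1 hx.2.2
        exact Finset.mem_biUnion.2 ⟨c, hc, Finset.mem_filter.2 ⟨hx.1, hxc⟩⟩
    _ ≤ #(nbr u ∩ nbr v) * Δ := Finset.card_biUnion_le_card_mul _ _ _ fun c _ => hΔ c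
    _ ≤ 2 * Δ := by
        gcongr
        have := card_nbr_inter_nbr_le (a := u) (b := v) (by rintro rfl; simp at huv)
        rwa [if_pos huv] at this

lemma sum_deg₂_sq_le (A : Finset (V n)) {Δ : ℕ} (hΔ : ∀ c, deg A c ≤ Δ) :
    ∑ a ∈ A, deg₂ A a ^ 2 ≤ (2 * Δ + 1) * pairs₂ A + 6 * #A ^ 2 := by
  have hpt : ∀ u v, #{x ∈ A | hammingDist x u = 2 ∧ hammingDist x v = 2} ≤
      (if u = v then deg₂ A u else 0) + (if hammingDist u v = 2 then 2 * Δ else 0) + 6 := by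
    intro u v
    by_cases huv : u = v
    · subst huv
      simp [deg₂, hammingDist_comm]
    by_cases h2 : hammingDist u v = 2
    · simp only [if_neg huv, if_pos h2]
      linarith [card_filter_dist_two_le_of_dist_two hΔ h2]
    · simp only [if_neg huv, if_neg h2]
      linarith [card_filter_dist_two_le_six A huv h2]
  calc ∑ a ∈ A, deg₂ A a ^ 2
      = ∑ u ∈ A, ∑ v ∈ A, #{x ∈ A | hammingDist x u = 2 ∧ hammingDist x v = 2} :=
        Finset.sum_card_filter_sq A A _
    _ ≤ ∑ u ∈ A, ∑ v ∈ A, ((if u = v then deg₂ A u else 0) +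
          (if hammingDist u v = 2 then 2 * Δ else 0) + 6) := by
        gcongr with u _ v _
        exact hpt u v
    _ = ∑ u ∈ A, ((2 * Δ + 1) * deg₂ A u + 6 * #A) := by
        refine Finset.sum_congr rfl fun u hu => ?_
        rw [Finset.sum_add_distrib, Finset.sum_add_distrib, Finset.sum_ite_eq A u, if_pos hu,
          ← Finset.sum_filter, Finset.sum_const, Finset.sum_const, deg₂]
        simp only [smul_eq_mul]
        ring
    _ = (2 * Δ + 1) * pairs₂ A + 6 * #A ^ 2 := by
        rw [Finset.sum_add_distrib, ← Finset.mul_sum, Finset.sum_const, pairs₂, smul_eq_mul]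
        ring

lemma pairs₂_sq_le (A : Finset (V n)) {Δ : ℕ} (hΔ : ∀ c, deg A c ≤ Δ) :
    pairs₂ A ^ 2 ≤ #A * ((2 * Δ + 1) * pairs₂ A + 6 * #A ^ 2) :=
  calc pairs₂ A ^ 2 ≤ #A * ∑ a ∈ A, deg₂ A a ^ 2 := sq_sum_le_card_mul_sum_sq
    _ ≤ #A * ((2 * Δ + 1) * pairs₂ A + 6 * #A ^ 2) := by gcongr; exact sum_deg₂_sq_le A hΔ

lemma choose_two_le_card_nbrSet_add {B : Finset (V n)} {w : V n} (hB : B ⊆ nbr w) :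
    n.choose 2 ≤ #(nbrSet B) + (n - #B).choose 2 := by
  set I : Finset (Fin n) := {i | flipAt w {i} ∈ B}
  have hI : #I = #B := by
    have himage : I.image (fun i => flipAt w {i}) = B := by
      ext b
      simp only [Finset.mem_image, Finset.mem_filter, Finset.mem_univ, true_and, I]
      refine ⟨fun ⟨i, hi, hib⟩ => hib ▸ hi, fun hb => ?_⟩
      obtain ⟨i, rfl⟩ := mem_nbr_iff_eq_flipAt.1 (hB hb)
      exact ⟨i, hb, rfl⟩
    rw [← himage, Finset.card_image_of_injective _ fun i j h =>
      Finset.singleton_injective (flipAt_injective w h)]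
  have hcover : ∀ S ∈ powersetCard 2 Finset.univ \ powersetCard 2 Iᶜ,
      flipAt w S ∈ nbrSet B := by
    intro S hS
    simp only [Finset.mem_sdiff, Finset.mem_powersetCard, Finset.subset_univ, true_and,
      not_and] at hS
    obtain ⟨i, hiS, hiI⟩ : ∃ i ∈ S, i ∈ I := by
      by_contra! h
      exact hS.2 (fun i hi => Finset.mem_compl.2 (h i hi)) hS.1
    refine Finset.mem_biUnion.2 ⟨flipAt w {i}, (Finset.mem_filter.1 hiI).2, ?_⟩
    rw [mem_nbr, ← card_diffSet, ← symmDiff_diffSet _ w, diffSet_flipAt, diffSet_comm,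
      diffSet_flipAt, symmDiff_of_ge (Finset.singleton_subset_iff.2 hiS),
      Finset.card_sdiff_of_subset (Finset.singleton_subset_iff.2 hiS), hS.1]
    rfl
  calc n.choose 2 = #(powersetCard 2 (Finset.univ : Finset (Fin n))) := by simp
    _ ≤ #((powersetCard 2 Finset.univ \ powersetCard 2 Iᶜ).image (flipAt w)) +
          #(powersetCard 2 Iᶜ) := by
        rw [Finset.card_image_of_injective _ (flipAt_injective w)]
        exact Finset.card_le_card_sdiff_add_card
    _ ≤ #(nbrSet B) + (n - #B).choose 2 := by
        gcongr
        · intro x hx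
          obtain ⟨S, hS, rfl⟩ := Finset.mem_image.1 hx
          exact hcover S hS
        · rw [Finset.card_powersetCard, Finset.card_compl, Fintype.card_fin, hI]

lemma card_nbrSet_inter_nbrSet_le {B K : Finset (V n)} {w : V n} (hB : B ⊆ nbr w)
    (hK : Disjoint K (nbr w)) : #(nbrSet B ∩ nbrSet K) ≤ 6 * #K := by
  rw [nbrSet.eq_def K, Finset.inter_biUnion, mul_comm]
  refine Finset.card_biUnion_le_card_mul _ _ _ fun a ha => ?_
  have haw : a ∉ nbr w := Finset.disjoint_left.1 hK ha
  calc #(nbrSet B ∩ nbr a) = #(B.biUnion fun b => nbr a ∩ nbr b) := by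
        rw [Finset.inter_comm, nbrSet, Finset.inter_biUnion]
    _ ≤ ∑ b ∈ B, #(nbr a ∩ nbr b) := Finset.card_biUnion_le
    _ ≤ 2 * #{b ∈ B | hammingDist a b = 2} :=
        sum_card_nbr_inter_nbr_le fun haB => haw (hB haB)
    _ ≤ 2 * #{b ∈ nbr w | hammingDist a b = 2} := by gcongr
    _ ≤ 6 := by
        have := card_filter_nbr_dist_two_le_three (mt mem_nbr.2 haw)
        omega

lemma card_nbrSet_filter_not_mem_nbr_add_choose_le (A : Finset (V n)) (w : V n) :
    #(nbrSet {a ∈ A | a ∉ nbr w}) + n.choose 2 ≤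
      #(nbrSet A) + 6 * #{a ∈ A | a ∉ nbr w} + (n - deg A w).choose 2 := by
  set B := A.filter (· ∈ nbr w)
  set K := A.filter (· ∉ nbr w)
  have hB : B ⊆ nbr w := fun b hb => (Finset.mem_filter.1 hb).2
  have hK : Disjoint K (nbr w) := Finset.disjoint_left.2 fun a ha => (Finset.mem_filter.1 ha).2
  have hunion : nbrSet B ∪ nbrSet K = nbrSet A := by
    rw [nbrSet, nbrSet, ← Finset.union_biUnion, Finset.filter_union_filter_not_eq]
    rfl
  have hunion_inter := Finset.card_union_add_card_inter (nbrSet B) (nbrSet K)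
  rw [hunion] at hunion_inter
  have hstar : n.choose 2 ≤ #(nbrSet B) + (n - deg A w).choose 2 :=
    choose_two_le_card_nbrSet_add hB
  have := card_nbrSet_inter_nbrSet_le hB hK
  omega

theorem exists_deg_ge_of_card_nbrSet_le (A : Finset (V n)) {s : ℝ} (hA : #A = n)
    (hn : 10 ^ 4 ≤ n) (hs0 : 0 ≤ s) (hs : s ≤ n / 1000)
    (hΓ : #(nbrSet A) ≤ n.choose 2 + n * s) :
    ∃ w, n - 100 * s ≤ deg A w := by
  obtain ⟨w, -, hw⟩ := Finset.exists_max_image Finset.univ (deg A) Finset.univ_nonempty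
  refine ⟨w, ?_⟩
  set K := A.filter (· ∉ nbr w)
  have hBK : deg A w + #K = n := by
    rw [← Finset.card_filter_add_card_filter_not (· ∈ nbr w)] at hA
    exact hA
  have hBK' : (deg A w : ℝ) + #K = n := by exact_mod_cast hBK
  have hn' : (10 ^ 4 : ℝ) ≤ n := by exact_mod_cast hn
  have hchoose (m : ℕ) : ((m.choose 2 : ℕ) : ℝ) = m * (m - 1) / 2 := Nat.cast_choose_two ℝ m
  have hE : 499 / 1000 * (n : ℝ) ^ 2 ≤ pairs₂ A := by
    have h := mul_card_le_card_nbrSet_add_pairs₂ A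
    rw [hA] at h
    have : (n : ℝ) * n ≤ #(nbrSet A) + pairs₂ A := by exact_mod_cast h
    nlinarith [hchoose n]
  have hcherry :
      ((pairs₂ A : ℕ) : ℝ) ^ 2 ≤ n * ((2 * deg A w + 1) * pairs₂ A + 6 * n ^ 2) := by
    have h := pairs₂_sq_le A fun c => hw c (Finset.mem_univ c)
    rw [hA] at h
    exact_mod_cast h
  have hΔ := six_mul_le_of_sq_le (by linarith) hE hcherry
  have hGK : (#(nbrSet K) : ℝ) ≤ n * s + 6 * #K + (#K : ℝ) ^ 2 / 2 := by
    have h := card_nbrSet_filter_not_mem_nbr_add_choose_le A w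
    rw [show n - deg A w = #K by omega] at h
    have : (#(nbrSet K) : ℝ) + n.choose 2 ≤ #(nbrSet A) + 6 * #K + (#K).choose 2 := by
      exact_mod_cast h
    nlinarith [hchoose (#K)]
  have hcorr : ((n : ℝ) * #K) ^ 2 ≤ #(nbrSet K) * (n * #K + 2 * #K ^ 2) := by
    have h := (sq_mul_card_le_card_nbrSet_mul K).trans
      (Nat.mul_le_mul_left _ (Nat.add_le_add_left (Nat.mul_le_mul_left 2 (pairs₂_le_sq K)) _))
    exact_mod_cast h
  have hk : (#K : ℝ) ≤ 100 * s :=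
    le_hundred_mul_of_sq_le hn' hs0 (by positivity) (by linarith) (hcorr.trans (by gcongr))
  linarith

end Hypercube

theorem harper_stability_general
    (s : ℕ → ℕ)
    (hso : (fun n => (s n : ℝ)) =o[atTop] fun n => (n : ℝ)) :
    ∃ C : ℝ, 0 < C ∧ ∀ᶠ n : ℕ in atTop, ∀ A : Set (V n),
      A.ncard = n → ((nbhdSet n A).ncard : ℝ) ≤ (n.choose 2 : ℝ) + n * s n →
      ∃ w : V n, (n : ℝ) - C * s n ≤ ((nbhd n w ∩ A).ncard : ℝ) := by
  refine ⟨100, by norm_num, ?_⟩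
  filter_upwards [hso.bound (by norm_num : (0 : ℝ) < 1 / 1000), eventually_ge_atTop (10 ^ 4)]
    with n hsn hn A hA hΓ
  lift A to Finset (V n) using A.toFinite
  rw [Set.ncard_coe_finset] at hA
  rw [← Hypercube.coe_nbrSet, Set.ncard_coe_finset] at hΓ
  have hs : (s n : ℝ) ≤ n / 1000 := by simpa [div_eq_inv_mul] using hsn
  obtain ⟨w, hw⟩ :=
    Hypercube.exists_deg_ge_of_card_nbrSet_le A hA hn (Nat.cast_nonneg _) hs hΓ
  exact ⟨w, by rwa [Hypercube.ncard_nbhd_inter]⟩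

/-- Theorem 1.6 (stability for Harper's theorem for sets of size `n`). -/
theorem harper_stability
    (s : ℕ → ℕ) (hs : Tendsto s atTop atTop)
    (hso : (fun n => (s n : ℝ)) =o[atTop] fun n => (n : ℝ)) :
    ∃ C : ℝ, 0 < C ∧ ∀ᶠ n : ℕ in atTop, ∀ A : Set (V n),
      A.ncard = n → ((nbhdSet n A).ncard : ℝ) ≤ (n.choose 2 : ℝ) + n * s n →
      ∃ w : V n, (n : ℝ) - C * s n ≤ ((nbhd n w ∩ A).ncard : ℝ) :=
  harper_stability_general s hso
end
end

section
/- Let r ≥ 2 be an integer and let s : ℕ → ℕ be a function with s(n) → ∞ and s(n) = o(n) as n → ∞. Then there exists a constant C > 0 such that for all sufficiently large n the following holds: if A ⊆ V(Q_n) is such that |Γ(A)| ≤ binom(n,r) + n^(r−1)·s(n), then |A| ≤ binom(n,r−1) + C·n^(r−2)·s(n). -/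
open MeasureTheory Filter Set Asymptotics Topology

noncomputable section

/-!
Harper's vertex-isoperimetric inequality is used in the linearised form
`harperFn n |A| ≤ |Γ(A)|`, where `harperFn n` interpolates linearly between the points
`(∑_{i<k} C(n,i), C(n,k))`. It is proved by induction on the dimension: splitting the cube along a
coordinate into `A₀, A₁` gives `|Γ(A)| ≥ max(|Γ(A₀)|, |A₁|) + max(|Γ(A₁)|, |A₀|)`, and
the concavity of the interpolation closes the induction.

If `|A| > C(n,r-1) + C n^(r-2) s(n)`, then `|A| ≥ ∑_{i<r} C(n,i) + E` with
`E = 2(r+1) n^(r-2) s(n)`, and `E ≤ C(n,r)` because `s(n) = o(n)`. On this segment the profile has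
slope `(n-2r-1)/(r+1)`, so `|Γ(A)| ≥ C(n,r) + 2 n^(r-2) s(n) (n-2r-1) > C(n,r) + n^(r-1) s(n)`.
-/

open scoped symmDiff Nat

/-- The size of a Hamming ball of radius `k - 1` in `Q_n`. -/
def sumChoose (n k : ℕ) : ℕ := ∑ i ∈ Finset.range k, n.choose i

@[simp] lemma sumChoose_zero (n : ℕ) : sumChoose n 0 = 0 := rfl

lemma sumChoose_succ (n k : ℕ) : sumChoose n (k + 1) = sumChoose n k + n.choose k :=
  Finset.sum_range_succ _ _

lemma sumChoose_mono (n : ℕ) : Monotone (sumChoose n) := fun _ _ h =>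
  Finset.sum_le_sum_of_subset (Finset.range_subset_range.2 h)

lemma sumChoose_self_succ (n : ℕ) : sumChoose n (n + 1) = 2 ^ n := Nat.sum_range_choose n

lemma sumChoose_succ_succ (n k : ℕ) :
    sumChoose (n + 1) (k + 1) = sumChoose n (k + 1) + sumChoose n k := by
  induction k with
  | zero => simp [sumChoose]
  | succ k ih =>
    rw [sumChoose_succ (n + 1), ih, Nat.choose_succ_succ, sumChoose_succ n (k + 1),
      sumChoose_succ n k]
    ring

lemma sumChoose_succ_le {n : ℕ} (hn : 1 ≤ n) (k : ℕ) :
    sumChoose n (k + 1) ≤ (k + 1) * n ^ k := by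
  calc sumChoose n (k + 1) ≤ ∑ _i ∈ Finset.range (k + 1), n ^ k :=
        Finset.sum_le_sum fun i hi => (Nat.choose_le_pow n i).trans
          (Nat.pow_le_pow_right hn (Nat.lt_succ_iff.1 (Finset.mem_range.1 hi)))
    _ = (k + 1) * n ^ k := by simp

lemma cast_choose_succ (n k : ℕ) :
    (n.choose (k + 1) : ℝ) = n.choose k * (n - k) / (k + 1) := by
  rw [eq_div_iff (by positivity)]
  rcases le_or_gt k n with h | h
  · have := congrArg (Nat.cast (R := ℝ)) (Nat.choose_succ_right_eq n k)
    push_cast [Nat.cast_sub h] at this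
    exact this
  · simp [Nat.choose_eq_zero_of_lt h, Nat.choose_eq_zero_of_lt (Nat.lt_succ_of_lt h)]

/-- The line through `(sumChoose n k, C(n, k))` and `(sumChoose n (k + 1), C(n, k + 1))`; its slope
`(C(n, k + 1) - C(n, k)) / C(n, k)` is written in closed form so that it makes sense for all `k`. -/
def harperLine (n k : ℕ) (m : ℝ) : ℝ :=
  n.choose k + (m - sumChoose n k) * (((n : ℝ) - 2 * k - 1) / (k + 1))

lemma harperLine_eq_choose_succ_add (n k : ℕ) (m : ℝ) :
    harperLine n k m =
      n.choose (k + 1) + (m - sumChoose n (k + 1)) * (((n : ℝ) - 2 * k - 1) / (k + 1)) := by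
  rw [harperLine, sumChoose_succ, cast_choose_succ]
  push_cast
  field_simp
  ring

lemma harperLine_sub_harperLine_succ (n k : ℕ) (m : ℝ) :
    harperLine n k m - harperLine n (k + 1) m =
      (m - sumChoose n (k + 1)) * (n + 1) / ((k + 1) * (k + 2)) := by
  rw [harperLine, harperLine, sumChoose_succ, cast_choose_succ]
  push_cast
  field_simp
  ring

lemma harperLine_succ_add (n k : ℕ) (x y : ℝ) :
    harperLine (n + 1) k (x + y) =
      harperLine n k x + harperLine n k y - (sumChoose (n + 1) (k + 1) - (x + y)) / (k + 1) := by
  rw [harperLine_eq_choose_succ_add, harperLine, harperLine, sumChoose_succ_succ, Nat.choose_succ_succ',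
    sumChoose_succ n k]
  push_cast
  rw [cast_choose_succ]
  field_simp
  ring

lemma harperLine_succ_succ_add (n k : ℕ) (x y : ℝ) :
    harperLine (n + 1) (k + 1) (x + y) =
      harperLine n k x + harperLine n k y -
        (x + y - sumChoose (n + 1) (k + 1)) * (n - k) / ((k + 1) * (k + 2)) := by
  rw [harperLine, harperLine, harperLine, sumChoose_succ_succ, Nat.choose_succ_succ',
    sumChoose_succ n k]
  push_cast
  rw [cast_choose_succ]
  field_simp
  ring

lemma harperLine_succ_succ_add' (n k : ℕ) (x y : ℝ) :
    harperLine (n + 1) (k + 1) (x + y) =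
      harperLine n (k + 1) x + ((k + 1) * harperLine n k y + (x - y)) / (k + 2) := by
  rw [harperLine, harperLine, harperLine, sumChoose_succ_succ, Nat.choose_succ_succ',
    sumChoose_succ n k]
  push_cast
  rw [cast_choose_succ]
  field_simp
  ring

lemma harperLine_add_le {n k : ℕ} (hk : k ≤ n) {m : ℝ} (hm : m ≤ sumChoose n k) :
    harperLine n k m + m ≤ sumChoose n (k + 1) := by
  have hslope : 0 ≤ ((n : ℝ) - k) / (k + 1) := div_nonneg (by simp [hk]) (by positivity)
  have key : harperLine n k m + m =
      sumChoose n (k + 1) + (m - sumChoose n k) * ((n - k) / (k + 1)) := by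
    rw [harperLine, sumChoose_succ]; push_cast; field_simp; ring
  rw [key]
  nlinarith

lemma harperLine_succ_le {n k : ℕ} {m : ℝ} (hm : sumChoose n (k + 1) ≤ m) :
    harperLine n (k + 1) m ≤ harperLine n k m := by
  have := harperLine_sub_harperLine_succ n k m
  have : 0 ≤ (m - sumChoose n (k + 1)) * (n + 1) / ((k + 1) * (k + 2)) := by
    apply div_nonneg (mul_nonneg (by linarith) (by positivity)) (by positivity)
  linarith

lemma harperLine_le_succ {n k : ℕ} {m : ℝ} (hm : m ≤ sumChoose n (k + 1)) :
    harperLine n k m ≤ harperLine n (k + 1) m := by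
  have := harperLine_sub_harperLine_succ n k m
  have : (m - sumChoose n (k + 1)) * (n + 1) / ((k + 1) * (k + 2)) ≤ 0 := by
    apply div_nonpos_of_nonpos_of_nonneg (mul_nonpos_of_nonpos_of_nonneg (by linarith)
      (by positivity)) (by positivity)
  linarith

lemma harperLine_le_of_mem_segment {n t : ℕ} {m : ℝ} (h₁ : sumChoose n t ≤ m)
    (h₂ : m ≤ sumChoose n (t + 1)) (k : ℕ) : harperLine n t m ≤ harperLine n k m := by
  rcases le_total k t with hkt | htk
  · induction hkt using Nat.decreasingInduction with
    | self => exact le_rfl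
    | of_succ k hk ih =>
      exact ih.trans (harperLine_succ_le (le_trans (mod_cast sumChoose_mono n hk) h₁))
  · induction k, htk using Nat.le_induction with
    | base => exact le_rfl
    | succ k hk ih =>
      exact ih.trans (harperLine_le_succ (h₂.trans (mod_cast sumChoose_mono n (by omega))))

/-- By `harperFn_eq_harperLine`, the piecewise-linear interpolation of the points
`(sumChoose n k, C(n, k))`, the sizes and vertex-boundary sizes of Hamming balls. -/
def harperFn (n : ℕ) (m : ℝ) : ℝ :=
  (Finset.range (n + 1)).inf' Finset.nonempty_range_add_one (harperLine n · m)

lemma harperFn_le_harperLine {n k : ℕ} (hk : k ≤ n) (m : ℝ) :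
    harperFn n m ≤ harperLine n k m :=
  Finset.inf'_le _ (Finset.mem_range_succ_iff.2 hk)

lemma harperFn_eq_harperLine {n k : ℕ} (hk : k ≤ n) {m : ℝ} (h₁ : sumChoose n k ≤ m)
    (h₂ : m ≤ sumChoose n (k + 1)) : harperFn n m = harperLine n k m :=
  le_antisymm (harperFn_le_harperLine hk m)
    (Finset.le_inf' _ _ fun j _ => harperLine_le_of_mem_segment h₁ h₂ j)

lemma exists_mem_segment {n k : ℕ} {m : ℝ} (h₀ : 0 ≤ m) (hm : m ≤ sumChoose n (k + 1)) :
    ∃ j ≤ k, sumChoose n j ≤ m ∧ m ≤ sumChoose n (j + 1) := by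
  induction k with
  | zero => exact ⟨0, le_rfl, by simpa using h₀, hm⟩
  | succ k ih =>
    rcases le_total m (sumChoose n (k + 1)) with h | h
    · obtain ⟨j, hj, hj'⟩ := ih h
      exact ⟨j, hj.trans k.le_succ, hj'⟩
    · exact ⟨k + 1, le_rfl, h, hm⟩

lemma harperFn_succ_add_le_harperLine_add {n k : ℕ} (hk : k ≤ n) (x y : ℝ) :
    harperFn (n + 1) (x + y) ≤ harperLine n k x + harperLine n k y := by
  rcases le_total (x + y) (sumChoose (n + 1) (k + 1)) with h | h
  · have : 0 ≤ (sumChoose (n + 1) (k + 1) - (x + y)) / (k + 1) :=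
      div_nonneg (by linarith) (by positivity)
    calc harperFn (n + 1) (x + y) ≤ harperLine (n + 1) k (x + y) :=
          harperFn_le_harperLine (by omega) _
      _ ≤ _ := by rw [harperLine_succ_add]; linarith
  · have : 0 ≤ (x + y - sumChoose (n + 1) (k + 1)) * (n - k) / ((k + 1) * (k + 2)) :=
      div_nonneg (mul_nonneg (by linarith) (by simp [hk])) (by positivity)
    calc harperFn (n + 1) (x + y) ≤ harperLine (n + 1) (k + 1) (x + y) :=
          harperFn_le_harperLine (by omega) _
      _ ≤ _ := by rw [harperLine_succ_succ_add]; linarith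

lemma harperFn_succ_add_le_harperLine_succ_add {n k : ℕ} (hk : k ≤ n) {x y M : ℝ}
    (h₁ : harperLine n k y ≤ M) (h₂ : x - y ≤ M) :
    harperFn (n + 1) (x + y) ≤ harperLine n (k + 1) x + M :=
  calc harperFn (n + 1) (x + y) ≤ harperLine (n + 1) (k + 1) (x + y) :=
        harperFn_le_harperLine (by omega) _
    _ = harperLine n (k + 1) x + ((k + 1) * harperLine n k y + (x - y)) / (k + 2) :=
        harperLine_succ_succ_add' n k x y
    _ ≤ harperLine n (k + 1) x + ((k + 1) * M + M) / (k + 2) := by gcongr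
    _ = harperLine n (k + 1) x + M := by field_simp; ring

theorem harperFn_succ_add_le {n : ℕ} {u v : ℝ} (hv : 0 ≤ v) (hvu : v ≤ u)
    (hu : u ≤ 2 ^ n) :
    harperFn (n + 1) (u + v) ≤ harperFn n u + max (u - v) (harperFn n v) := by
  obtain ⟨k, hk, hku, huk⟩ := exists_mem_segment (k := n) (hv.trans hvu)
    (by rw [sumChoose_self_succ]; exact_mod_cast hu)
  rw [harperFn_eq_harperLine hk hku huk]
  rcases le_or_gt (sumChoose n k : ℝ) v with hkv | hvk
  · rw [harperFn_eq_harperLine hk hkv (hvu.trans huk)]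
    exact (harperFn_succ_add_le_harperLine_add hk u v).trans
      (add_le_add_right (le_max_right _ _) _)
  · obtain ⟨j, rfl⟩ : ∃ j, k = j + 1 :=
      Nat.exists_eq_succ_of_ne_zero (by rintro rfl; simp at hvk; linarith)
    refine harperFn_succ_add_le_harperLine_succ_add (by omega) ?_ (le_max_left _ _)
    rcases le_total (sumChoose n j : ℝ) v with hjv | hvj
    · rw [← harperFn_eq_harperLine (by omega) hjv hvk.le]
      exact le_max_right _ _
    · exact (le_sub_iff_add_le.2 ((harperLine_add_le (by omega) hvj).trans hku)).trans
        (le_max_left _ _)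

/-- The recursion satisfied by neighbourhoods in the cube, split along one coordinate. -/
lemma harperFn_succ_add_le_max_add_max {n x y : ℕ} (hx : x ≤ 2 ^ n) (hy : y ≤ 2 ^ n)
    (hxy : 1 ≤ x + y) {a b : ℝ} (ha : 1 ≤ x → harperFn n x ≤ a)
    (hb : 1 ≤ y → harperFn n y ≤ b) :
    harperFn (n + 1) (x + y) ≤ max a y + max b x := by
  wlog hyx : y ≤ x generalizing x y a b
  · rw [add_comm (x : ℝ), add_comm (max a _)]
    exact this hy hx (by omega) hb ha (by omega)
  have key := harperFn_succ_add_le (n := n) (u := x) (v := y) (Nat.cast_nonneg y)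
    (mod_cast hyx) (mod_cast hx)
  rcases Nat.eq_zero_or_pos y with rfl | hy₁
  · simp only [Nat.cast_zero, add_zero, sub_zero] at key ⊢
    have h₀ : harperFn n 0 ≤ x := (harperFn_le_harperLine (Nat.zero_le n) 0).trans
      (by simp [harperLine]; exact_mod_cast hxy)
    calc harperFn (n + 1) x ≤ harperFn n x + max (x : ℝ) (harperFn n 0) := key
      _ ≤ a + x := add_le_add (ha hxy) (max_le le_rfl h₀)
      _ ≤ max a 0 + max b x := add_le_add (le_max_left _ _) (le_max_right _ _)
  · calc harperFn (n + 1) (x + y) ≤ harperFn n x + max ((x : ℝ) - y) (harperFn n y) := key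
      _ ≤ a + max b x := add_le_add (ha (by omega)) (by
          rw [max_comm b]; exact max_le_max (by linarith) (hb hy₁))
      _ ≤ max a y + max b x := add_le_add_left (le_max_left _ _) _

section Cube

open Finset

variable {α : Type*} [DecidableEq α] {U : Finset α} {𝒜 : Finset (Finset α)} {s t : Finset α}
  {a : α}

def cubeNbhd (U : Finset α) (𝒜 : Finset (Finset α)) : Finset (Finset α) :=
  {t ∈ U.powerset | ∃ s ∈ 𝒜, #(s ∆ t) = 1}

lemma mem_cubeNbhd : t ∈ cubeNbhd U 𝒜 ↔ t ⊆ U ∧ ∃ s ∈ 𝒜, #(s ∆ t) = 1 := by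
  simp [cubeNbhd]

lemma card_insert_symmDiff_self (ha : a ∉ s) : #(insert a s ∆ s) = 1 := by
  rw [card_eq_one]
  exact ⟨a, by ext x; by_cases x = a <;> simp_all [Finset.mem_symmDiff]⟩

lemma insert_symmDiff_insert (hs : a ∉ s) (ht : a ∉ t) :
    insert a s ∆ insert a t = s ∆ t := by
  ext x; by_cases x = a <;> simp_all [Finset.mem_symmDiff]

lemma cubeNbhd_nonMemberSubfamily_subset (ha : a ∉ U) :
    cubeNbhd U (𝒜.nonMemberSubfamily a) ⊆
      (cubeNbhd (insert a U) 𝒜).nonMemberSubfamily a := by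
  intro t ht
  obtain ⟨htU, s, hs, hst⟩ := mem_cubeNbhd.1 ht
  exact mem_nonMemberSubfamily.2 ⟨mem_cubeNbhd.2 ⟨htU.trans (Finset.subset_insert a U), s,
    (mem_nonMemberSubfamily.1 hs).1, hst⟩, fun hat => ha (htU hat)⟩

lemma cubeNbhd_memberSubfamily_subset (ha : a ∉ U) :
    cubeNbhd U (𝒜.memberSubfamily a) ⊆ (cubeNbhd (insert a U) 𝒜).memberSubfamily a := by
  intro t ht
  obtain ⟨htU, s, hs, hst⟩ := mem_cubeNbhd.1 ht
  obtain ⟨hsa, has⟩ := mem_memberSubfamily.1 hs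
  have hat : a ∉ t := fun hat => ha (htU hat)
  exact mem_memberSubfamily.2 ⟨mem_cubeNbhd.2 ⟨insert_subset_insert a htU, insert a s, hsa,
    by rwa [insert_symmDiff_insert has hat]⟩, hat⟩

lemma memberSubfamily_subset_nonMemberSubfamily_cubeNbhd
    (h𝒜 : ∀ s ∈ 𝒜, s ⊆ insert a U) :
    𝒜.memberSubfamily a ⊆ (cubeNbhd (insert a U) 𝒜).nonMemberSubfamily a := by
  intro t ht
  obtain ⟨hta, hat⟩ := mem_memberSubfamily.1 ht
  exact mem_nonMemberSubfamily.2 ⟨mem_cubeNbhd.2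
    ⟨(Finset.subset_insert a t).trans (h𝒜 _ hta), insert a t, hta,
      card_insert_symmDiff_self hat⟩, hat⟩

lemma nonMemberSubfamily_subset_memberSubfamily_cubeNbhd
    (h𝒜 : ∀ s ∈ 𝒜, s ⊆ insert a U) :
    𝒜.nonMemberSubfamily a ⊆ (cubeNbhd (insert a U) 𝒜).memberSubfamily a := by
  intro t ht
  obtain ⟨ht𝒜, hat⟩ := mem_nonMemberSubfamily.1 ht
  exact mem_memberSubfamily.2 ⟨mem_cubeNbhd.2
    ⟨Finset.insert_subset (mem_insert_self a U) (h𝒜 t ht𝒜), t, ht𝒜,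
      by rw [symmDiff_comm, card_insert_symmDiff_self hat]⟩, hat⟩

lemma max_add_max_le_card_cubeNbhd_insert (ha : a ∉ U)
    (h𝒜 : ∀ s ∈ 𝒜, s ⊆ insert a U) :
    max #(cubeNbhd U (𝒜.memberSubfamily a)) #(𝒜.nonMemberSubfamily a) +
      max #(cubeNbhd U (𝒜.nonMemberSubfamily a)) #(𝒜.memberSubfamily a) ≤
        #(cubeNbhd (insert a U) 𝒜) := by
  rw [← card_memberSubfamily_add_card_nonMemberSubfamily a (cubeNbhd (insert a U) 𝒜)]
  exact add_le_add
    (max_le (Finset.card_le_card (cubeNbhd_memberSubfamily_subset ha))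
      (Finset.card_le_card (nonMemberSubfamily_subset_memberSubfamily_cubeNbhd h𝒜)))
    (max_le (Finset.card_le_card (cubeNbhd_nonMemberSubfamily_subset ha))
      (Finset.card_le_card (memberSubfamily_subset_nonMemberSubfamily_cubeNbhd h𝒜)))

/-- **Harper's vertex-isoperimetric inequality**, in linearised form. -/
theorem harperFn_le_card_cubeNbhd (h𝒜U : ∀ s ∈ 𝒜, s ⊆ U) (h𝒜 : 𝒜.Nonempty) :
    harperFn #U #𝒜 ≤ #(cubeNbhd U 𝒜) := by
  induction U using Finset.induction generalizing 𝒜 with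
  | empty =>
    have h𝒜₁ : #𝒜 = 1 := le_antisymm
      (card_le_one.2 fun s hs t ht => by
        rw [subset_empty.1 (h𝒜U s hs), subset_empty.1 (h𝒜U t ht)])
      h𝒜.card_pos
    calc harperFn #(∅ : Finset α) #𝒜 ≤ harperLine 0 0 1 := by
          rw [h𝒜₁, Finset.card_empty, Nat.cast_one]; exact harperFn_le_harperLine le_rfl 1
      _ = 0 := by simp [harperLine]
      _ ≤ _ := Nat.cast_nonneg _
  | insert a U ha ih =>
    have h₀ : ∀ s ∈ 𝒜.nonMemberSubfamily a, s ⊆ U := fun s hs => by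
      rw [mem_nonMemberSubfamily] at hs
      exact (Finset.subset_insert_iff_of_notMem hs.2).1 (h𝒜U _ hs.1)
    have h₁ : ∀ s ∈ 𝒜.memberSubfamily a, s ⊆ U := fun s hs => by
      rw [mem_memberSubfamily] at hs
      exact (Finset.subset_insert_iff_of_notMem hs.2).1
        ((Finset.subset_insert _ _).trans (h𝒜U _ hs.1))
    have hcard (ℬ : Finset (Finset α)) (hℬ : ∀ s ∈ ℬ, s ⊆ U) : #ℬ ≤ 2 ^ #U :=
      (Finset.card_le_card fun s hs => mem_powerset.2 (hℬ s hs)).trans_eq (card_powerset U)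
    rw [card_insert_of_notMem ha, ← card_memberSubfamily_add_card_nonMemberSubfamily a 𝒜,
      Nat.cast_add]
    refine (harperFn_succ_add_le_max_add_max (hcard _ h₁) (hcard _ h₀)
      (by rw [card_memberSubfamily_add_card_nonMemberSubfamily]; exact h𝒜.card_pos)
      (fun h => ih h₁ (card_pos.1 h)) (fun h => ih h₀ (card_pos.1 h))).trans ?_
    exact_mod_cast max_add_max_le_card_cubeNbhd_insert ha h𝒜U

end Cube

def cubeEquiv (n : ℕ) : V n ≃ Finset (Fin n) where
  toFun v := {i | v i}
  invFun s i := decide (i ∈ s)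
  left_inv v := by ext i; simp
  right_inv s := by ext i; simp

lemma hammingDist_eq_card_symmDiff {n : ℕ} (v w : V n) :
    hammingDist v w = (cubeEquiv n v ∆ cubeEquiv n w).card := by
  unfold hammingDist
  congr 1
  ext i
  cases hv : v i <;> cases hw : w i <;> simp [cubeEquiv, Finset.mem_symmDiff, hv, hw]

lemma mem_nbhdSet {n : ℕ} {A : Set (V n)} {w : V n} :
    w ∈ nbhdSet n A ↔ ∃ v ∈ A, hammingDist v w = 1 := by
  simp only [nbhdSet, nbhd, Q, Set.mem_iUnion, SimpleGraph.mem_neighborSet,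
    SimpleGraph.fromRel_adj, exists_prop, hammingDist_comm w]
  refine exists_congr fun v => and_congr_right fun _ =>
    ⟨fun h => h.2.elim id id, fun h => ⟨?_, .inl h⟩⟩
  rintro rfl
  simp at h

lemma ncard_nbhdSet {n : ℕ} (A : Finset (V n)) :
    (nbhdSet n A).ncard = (cubeNbhd Finset.univ (A.image (cubeEquiv n))).card := by
  rw [← Set.ncard_image_of_injective _ (cubeEquiv n).injective, ← Set.ncard_coe_finset]
  congr 1
  ext t
  simp [(cubeEquiv n).image_eq_preimage_symm, mem_nbhdSet, mem_cubeNbhd,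
    hammingDist_eq_card_symmDiff]

theorem harperFn_le_ncard_nbhdSet {n : ℕ} {A : Set (V n)} (hA : A.Nonempty) :
    harperFn n A.ncard ≤ (nbhdSet n A).ncard := by
  lift A to Finset (V n) using A.toFinite
  have := harperFn_le_card_cubeNbhd (fun s _ => Finset.subset_univ s)
    ((Finset.coe_nonempty.1 hA).image (cubeEquiv n))
  rw [Finset.card_image_of_injective _ (cubeEquiv n).injective, Finset.card_univ,
    Fintype.card_fin] at this
  rwa [ncard_nbhdSet, Set.ncard_coe_finset]

lemma harperLine_le_ncard_nbhdSet {n k m : ℕ} (hk : k ≤ n) (hm : 1 ≤ m)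
    (h₁ : sumChoose n k ≤ m) (h₂ : m ≤ sumChoose n (k + 1)) {A : Set (V n)}
    (hmA : m ≤ A.ncard) :
    harperLine n k m ≤ (nbhdSet n A).ncard := by
  obtain ⟨B, hBA, hB⟩ := Set.exists_subset_card_eq hmA
  calc harperLine n k m = harperFn n B.ncard := by
        rw [hB, harperFn_eq_harperLine hk (mod_cast h₁) (mod_cast h₂)]
    _ ≤ (nbhdSet n B).ncard :=
        harperFn_le_ncard_nbhdSet (Set.nonempty_of_ncard_ne_zero (by omega))
    _ ≤ (nbhdSet n A).ncard :=
        mod_cast Set.ncard_le_ncard (Set.biUnion_subset_biUnion_left hBA) (Set.toFinite _)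

lemma pow_le_two_pow_mul_factorial_mul_choose {n r : ℕ} (h : 2 * r ≤ n + 2) :
    n ^ r ≤ 2 ^ r * r ! * n.choose r :=
  calc n ^ r ≤ (2 * (n + 1 - r)) ^ r := Nat.pow_le_pow_left (by omega) r
    _ = 2 ^ r * (n + 1 - r) ^ r := mul_pow _ _ _
    _ ≤ 2 ^ r * n.descFactorial r := Nat.mul_le_mul_left _ (Nat.pow_sub_le_descFactorial n r)
    _ = 2 ^ r * r ! * n.choose r := by rw [Nat.descFactorial_eq_factorial_mul_choose, mul_assoc]

lemma mul_pow_le_choose {n r t : ℕ} (hr : 2 ≤ r) (hn : 2 * r ≤ n + 2)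
    (htn : 2 ^ r * r ! * (2 * (r + 1) * t) ≤ n) :
    2 * (r + 1) * (n ^ (r - 2) * t) ≤ n.choose r := by
  refine Nat.le_of_mul_le_mul_left ?_ (by positivity : 0 < 2 ^ r * r !)
  calc 2 ^ r * r ! * (2 * (r + 1) * (n ^ (r - 2) * t))
        = 2 ^ r * r ! * (2 * (r + 1) * t) * n ^ (r - 2) := by ring
    _ ≤ n * n ^ (r - 2) := Nat.mul_le_mul_right _ htn
    _ ≤ n ^ r := by rw [← pow_succ']; exact Nat.pow_le_pow_right (by omega) (by omega)
    _ ≤ 2 ^ r * r ! * n.choose r := pow_le_two_pow_mul_factorial_mul_choose hn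

lemma ncard_le_of_ncard_nbhdSet_le {n r t : ℕ} (hr : 2 ≤ r) (ht : 1 ≤ t) (hn : 4 * r + 3 ≤ n)
    (htn : 2 ^ r * r ! * (2 * (r + 1) * t) ≤ n) {A : Set (V n)}
    (hA : ((nbhdSet n A).ncard : ℝ) ≤ n.choose r + (n : ℝ) ^ (r - 1) * t) :
    (A.ncard : ℝ) ≤ n.choose (r - 1) + (3 * r + 1) * (n : ℝ) ^ (r - 2) * t := by
  have hE := mul_pow_le_choose hr (by omega) htn
  obtain ⟨p, rfl⟩ : ∃ p, r = p + 2 := ⟨r - 2, by omega⟩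
  rw [Nat.add_sub_cancel] at hE
  rw [show p + 2 - 1 = p + 1 by omega, pow_succ] at hA
  rw [show p + 2 - 1 = p + 1 by omega, Nat.add_sub_cancel]
  by_contra! hlt
  have hX : 0 < n ^ p * t := Nat.mul_pos (pow_pos (by omega) p) ht
  have hXr : (0 : ℝ) < n ^ p * t := mod_cast hX
  have hnr : (4 * p + 11 : ℝ) ≤ n := mod_cast (by omega : 4 * p + 11 ≤ n)
  let E := 2 * (p + 2 + 1) * (n ^ p * t)
  have hball : sumChoose n (p + 2) + E ≤ A.ncard := by
    have hS : (sumChoose n (p + 1) : ℝ) ≤ (p + 1) * (n ^ p * t) := by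
      have hS := sumChoose_succ_le (n := n) (by omega) p
      have : (n : ℝ) ^ p ≤ n ^ p * t := le_mul_of_one_le_right (by positivity) (mod_cast ht)
      calc (sumChoose n (p + 1) : ℝ) ≤ (p + 1) * n ^ p := mod_cast hS
        _ ≤ (p + 1) * (n ^ p * t) := by gcongr
    have : (sumChoose n (p + 2) + E : ℝ) < A.ncard := by
      simp only [E, sumChoose_succ n (p + 1)]; push_cast at hlt ⊢; linarith
    exact_mod_cast this.le
  have hΓ := harperLine_le_ncard_nbhdSet (k := p + 2) (by omega)
    ((Nat.mul_pos (by omega) hX).trans_le (Nat.le_add_left _ _)) le_self_add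
    (by rw [sumChoose_succ n (p + 2)]; omega) hball
  have hline : harperLine n (p + 2) ↑(sumChoose n (p + 2) + E) =
      n.choose (p + 2) + 2 * (n ^ p * t) * (n - 2 * p - 5) := by
    simp only [harperLine, E]; push_cast; field_simp; ring
  nlinarith [mul_pos hXr (by linarith : (0 : ℝ) < n - 4 * p - 10)]

/-- Corollary 3.4 (harper): if `|Γ(A)| ≤ binom(n,r) + n^(r-1) s(n)` then
`|A| ≤ binom(n,r-1) + C n^(r-2) s(n)`. -/
theorem small_shadow_of_small_nbhd
    (r : ℕ) (hr : 2 ≤ r)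
    (s : ℕ → ℕ) (hs : Tendsto s atTop atTop)
    (hso : (fun n => (s n : ℝ)) =o[atTop] fun n => (n : ℝ)) :
    ∃ C : ℝ, 0 < C ∧ ∀ᶠ n : ℕ in atTop, ∀ A : Set (V n),
      ((nbhdSet n A).ncard : ℝ) ≤ (n.choose r : ℝ) + (n : ℝ) ^ (r - 1) * s n →
      (A.ncard : ℝ) ≤ (n.choose (r - 1) : ℝ) + C * (n : ℝ) ^ (r - 2) * s n := by
  set K : ℕ := 2 ^ r * r ! * (2 * (r + 1))
  have hK : (0 : ℝ) < K := by positivity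
  refine ⟨3 * r + 1, by positivity, ?_⟩
  filter_upwards [hs.eventually_ge_atTop 1, eventually_ge_atTop (4 * r + 3),
    hso.bound (inv_pos.2 hK)] with n hs₁ hn hso_n A hA
  have hsn : K * s n ≤ n := by
    rw [Real.norm_natCast, Real.norm_natCast, ← div_eq_inv_mul, le_div_iff₀' hK] at hso_n
    exact_mod_cast hso_n
  exact ncard_le_of_ncard_nbhdSet_le hr hs₁ hn (by rwa [← mul_assoc]) hA

end
end
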